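/- arXiv:2403.20305 — 9 statements merged into one kernel-verified Lean document; each statement's English description precedes it below -/
import Mathlib

section
/- Let G be an Abelian group and let P be a nonzero multilinear polynomial of degree at most d in n Boolean variables with coefficients in G. Then P is nonzero at a uniformly random input from {0,1}^n with probability at least 2^{-d}; equivalently, the number of points a ∈ {0,1}^n with P(a) ≠ 0 is at least 2^{n-d}. -/
/-!
Write `P(1_A) = ∑_{I ⊆ A} c I` and pick `I₀` maximal (under inclusion) among the sets with
`c I₀ ≠ 0`. Fix the coordinates outside `I₀` to any `B ⊆ I₀ᶜ`; on the resulting subcube of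
dimension `#I₀` the polynomial restricts to one in the variables of `I₀` whose top coefficient is
`c I₀`, by maximality. A nonzero coefficient family has nonzero subset sums (take a minimal set
carrying a nonzero coefficient), so every one of the `2 ^ (n - #I₀) ≥ 2 ^ (n - d)` subcubes
contains a point where `P` does not vanish.
-/

/-- Evaluation of a multilinear polynomial with coefficients `c : Finset (Fin n) → G`
at a Boolean point `a`. -/
def mEval {n : ℕ} {G : Type*} [AddCommGroup G] (c : Finset (Fin n) → G)
    (a : Fin n → Bool) : G :=
  ∑ I : Finset (Fin n), if ∀ i ∈ I, a i = true then c I else 0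

open Finset

namespace Finset

variable {α M : Type*} [AddCommMonoid M]

theorem exists_subset_sum_powerset_ne_zero {g : Finset α → M} {S₀ : Finset α}
    (h : g S₀ ≠ 0) : ∃ S ⊆ S₀, ∑ T ∈ S.powerset, g T ≠ 0 := by
  obtain ⟨S, hSS₀, hS⟩ := exists_minimal_le_of_wellFoundedLT (g · ≠ 0) S₀ h
  refine ⟨S, hSS₀, ?_⟩
  rw [sum_eq_single_of_mem S (mem_powerset_self S)]
  · exact hS.1
  intro T hT hTS
  by_contra hT'
  exact hTS (hS.eq_of_le hT' (mem_powerset.1 hT))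

variable [DecidableEq α]

theorem sum_powerset_union_of_disjoint {S B : Finset α} (h : Disjoint S B)
    (f : Finset α → M) :
    ∑ I ∈ (S ∪ B).powerset, f I = ∑ T ∈ S.powerset, ∑ U ∈ B.powerset, f (T ∪ U) := by
  rw [← sum_product']
  refine sum_nbij' (fun I ↦ (I ∩ S, I ∩ B)) (fun p ↦ p.1 ∪ p.2) ?_ ?_ ?_ ?_ ?_ <;>
    simp only [mem_product, mem_powerset, Prod.forall, Prod.mk.injEq]
  · exact fun I _ ↦ ⟨inter_subset_right, inter_subset_right⟩
  · exact fun T U hTU ↦ union_subset_union hTU.1 hTU.2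
  · exact fun I hI ↦ by rw [← inter_union_distrib_left, inter_eq_left.2 hI]
  · intro T U hTU
    rw [union_inter_distrib_right, union_inter_distrib_right, inter_eq_left.2 hTU.1,
      inter_eq_left.2 hTU.2, disjoint_iff_inter_eq_empty.1 (h.mono_left hTU.1),
      disjoint_iff_inter_eq_empty.1 (h.mono_right hTU.2).symm, union_empty, empty_union]
    exact ⟨rfl, rfl⟩
  · exact fun I hI ↦ by rw [← inter_union_distrib_left, inter_eq_left.2 hI]

theorem exists_subset_sum_powerset_union_ne_zero {c : Finset α → M} {I₀ B : Finset α}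
    (hI₀ : Maximal (c · ≠ 0) I₀) (hB : Disjoint I₀ B) :
    ∃ S ⊆ I₀, ∑ I ∈ (S ∪ B).powerset, c I ≠ 0 := by
  -- `T ↦ ∑ U ⊆ B, c (T ∪ U)` are the coefficients of `P` restricted to the subcube `B`
  have htop : ∑ U ∈ B.powerset, c (I₀ ∪ U) = c I₀ := by
    rw [sum_eq_single_of_mem ∅ (empty_mem_powerset B), union_empty]
    intro U hU hU₀
    by_contra hne
    have hUI₀ : U ⊆ I₀ := union_eq_left.1 (hI₀.eq_of_ge hne subset_union_left)
    exact hU₀ (disjoint_self_iff_empty U |>.1 (hB.mono hUI₀ (mem_powerset.1 hU)))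
  obtain ⟨S, hS, hsum⟩ := exists_subset_sum_powerset_ne_zero
    (g := fun T ↦ ∑ U ∈ B.powerset, c (T ∪ U)) (by rw [htop]; exact hI₀.1)
  exact ⟨S, hS, by rwa [sum_powerset_union_of_disjoint (hB.mono_left hS)]⟩

open Classical in
theorem two_pow_card_sub_le_card_sum_powerset_ne_zero [Fintype α] {c : Finset α → M}
    {I₀ : Finset α} (hI₀ : Maximal (c · ≠ 0) I₀) :
    2 ^ (Fintype.card α - #I₀) ≤ #{A : Finset α | ∑ I ∈ A.powerset, c I ≠ 0} := by
  rw [← card_compl, ← card_powerset]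
  refine card_le_card_of_surjOn (· \ I₀) fun B hB ↦ ?_
  have hB : Disjoint I₀ B := subset_compl_iff_disjoint_left.1 (mem_powerset.1 hB)
  obtain ⟨S, hS, hsum⟩ := exists_subset_sum_powerset_union_ne_zero hI₀ hB
  refine ⟨S ∪ B, by simpa using hsum, ?_⟩
  dsimp only
  rw [union_sdiff_distrib, sdiff_eq_empty_iff_subset.2 hS, empty_union,
    sdiff_eq_self_of_disjoint hB.symm]

end Finset

theorem mEval_decide_mem {n : ℕ} {G : Type*} [AddCommGroup G] (c : Finset (Fin n) → G)
    (A : Finset (Fin n)) : mEval c (fun i ↦ decide (i ∈ A)) = ∑ I ∈ A.powerset, c I := by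
  rw [mEval, ← sum_filter]
  congr 1
  ext I
  simp [subset_iff]

open Classical in
theorem card_sum_powerset_ne_zero_le_card_mEval_ne_zero {n : ℕ} {G : Type*} [AddCommGroup G]
    (c : Finset (Fin n) → G) :
    #{A : Finset (Fin n) | ∑ I ∈ A.powerset, c I ≠ 0} ≤
      Nat.card {a : Fin n → Bool | mEval c a ≠ 0} := by
  rw [Nat.card_eq_card_toFinset, Set.toFinset_ofPred]
  refine card_le_card_of_injOn (fun A i ↦ decide (i ∈ A)) (fun A hA ↦ ?_) fun A _ A' _ h ↦ ?_
  · simpa [mEval_decide_mem] using hA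
  · ext i
    simpa using congrFun h i

/-- DeMillo–Lipton–Schwartz–Zippel over the Boolean cube: a nonzero multilinear
polynomial of degree at most `d` is nonzero on at least `2^(n-d)` points of `{0,1}^n`. -/
theorem stmt_1 (n d : ℕ) (G : Type*) [AddCommGroup G] (c : Finset (Fin n) → G)
    (hdeg : ∀ I, c I ≠ 0 → I.card ≤ d) (hne : c ≠ 0) :
    2 ^ (n - d) ≤ Nat.card {a : Fin n → Bool | mEval c a ≠ 0} := by
  classical
  obtain ⟨I, hI⟩ := Function.ne_iff.1 hne
  obtain ⟨I₀, -, hI₀⟩ := exists_maximal_ge_of_wellFoundedGT (c · ≠ 0) I hI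
  calc 2 ^ (n - d) ≤ 2 ^ (Fintype.card (Fin n) - #I₀) := by
        rw [Fintype.card_fin]
        exact Nat.pow_le_pow_right two_pos (Nat.sub_le_sub_left (hdeg I₀ hI₀.1) n)
    _ ≤ #{A : Finset (Fin n) | ∑ I ∈ A.powerset, c I ≠ 0} :=
        two_pow_card_sub_le_card_sum_powerset_ne_zero hI₀
    _ ≤ Nat.card {a : Fin n → Bool | mEval c a ≠ 0} :=
        card_sum_powerset_ne_zero_le_card_mEval_ne_zero c
end

section
/- For any Abelian group G and degree bound d, any two distinct degree-d multilinear polynomials P, Q : {0,1}^n → G differ on at least a 2^{-d} fraction of points of {0,1}^n. Consequently, any function f : {0,1}^n → G agrees with at most one degree-d polynomial on strictly more than a (1 - 2^{-(d+1)}) fraction of points. -/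
/-!
Write `ζ c S = ∑_{J ⊆ S} c J`, the value of the polynomial with coefficients `c` at the
indicator of `S`. Let `I` be a set of maximal size with `c I ≠ 0`. For each `K` disjoint from
`I`, the function `T ↦ ζ c (T ∪ K)` on subsets of `I` is again multilinear, with top coefficient
`c I ≠ 0`, so it does not vanish identically. Hence each of the `2 ^ (n - |I|) ≥ 2 ^ (n - d)`
patterns outside `I` extends to a point where `ζ c ≠ 0`; applied to `c = p - q` this is the
first claim. For the second, two polynomials agreeing with `f` on more than a `1 - 2^(-(d+1))`
fraction of the points agree with each other on more than a `1 - 2^(-d)` fraction.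
-/

open Finset

/-- Induction on `I`: for `i ∉ S`, `ζ c (insert i S) = ζ c S + ζ (c ∘ insert i) S`, and
`c ∘ insert i` satisfies the hypotheses for `I \ {i}`. -/
theorem exists_subset_sum_powerset_union_ne_zero {α G : Type*} [DecidableEq α] [AddCommGroup G]
    (c : Finset α → G) {I K : Finset α}
    (hIK : Disjoint I K) (hI : c I ≠ 0)
    (hmax : ∀ J, I ⊆ J → J ⊆ I ∪ K → J ≠ I → c J = 0) :
    ∃ T ⊆ I, ∑ J ∈ (T ∪ K).powerset, c J ≠ 0 := by
  induction I using Finset.induction_on generalizing c with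
  | empty =>
    refine ⟨∅, empty_subset _, ?_⟩
    rwa [empty_union, sum_eq_single_of_mem ∅ (empty_mem_powerset K)]
    intro J hJ hJ0
    exact hmax J (empty_subset J) (by simpa using hJ) hJ0
  | insert i I hi ih =>
    have hiK : i ∉ K := disjoint_left.mp hIK (mem_insert_self i I)
    obtain ⟨T, hTI, hT⟩ := ih (fun J => c (insert i J)) (hIK.mono_left (subset_insert i I)) hI
      fun J hIJ hJ hJI => hmax _ (insert_subset_insert i hIJ)
        (by rw [insert_union]; exact insert_subset_insert i hJ)
        fun h => hJI <| by
          have hiJ : i ∉ J := fun h' => (mem_union.mp (hJ h')).elim hi hiK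
          rw [← erase_insert hiJ, h, erase_insert hi]
    have hiTK : i ∉ T ∪ K := fun h => (mem_union.mp h).elim (hi <| hTI ·) hiK
    have hsplit := sum_powerset_insert hiTK c
    by_cases h : ∑ J ∈ (T ∪ K).powerset, c J = 0
    · refine ⟨insert i T, insert_subset_insert i hTI, ?_⟩
      rwa [insert_union, hsplit, h, zero_add]
    · exact ⟨T, hTI.trans (subset_insert i I), h⟩

theorem card_add_card_add_card_le_two_mul_card {β : Type*} [Fintype β] [DecidableEq β]
    (A B D : Finset β) (h : Disjoint (A ∩ B) D) : #A + #B + #D ≤ 2 * Fintype.card β := by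
  have hAB := card_union_add_card_inter A B
  have hunion := card_le_univ (A ∪ B)
  have hinter := card_le_univ (A ∩ B ∪ D)
  rw [card_union_of_disjoint h] at hinter
  omega

section MultilinearPolynomial

variable {n : ℕ} {G : Type*} [AddCommGroup G]

theorem mEval_indicator (c : Finset (Fin n) → G) (S : Finset (Fin n)) :
    mEval c (fun i => decide (i ∈ S)) = ∑ J ∈ S.powerset, c J := by
  rw [mEval, ← sum_filter]
  congr 1
  ext J
  simp [subset_iff]

theorem mEval_sub (p q : Finset (Fin n) → G) (x : Fin n → Bool) :
    mEval (p - q) x = mEval p x - mEval q x := by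
  simp only [mEval, ← sum_sub_distrib]
  refine sum_congr rfl fun I _ => ?_
  split_ifs <;> simp

theorem two_pow_sub_card_le_card_mEval_ne_zero (c : Finset (Fin n) → G)
    {I : Finset (Fin n)} (hI : c I ≠ 0) (hmax : ∀ J, I ⊂ J → c J = 0) :
    2 ^ (n - #I) ≤ Nat.card {x : Fin n → Bool | mEval c x ≠ 0} := by
  classical
  simp only [Nat.card_eq_fintype_card, Fintype.card_ofFinset, Set.mem_ofPred_eq]
  have hext (K : Finset (Fin n)) (hK : K ∈ Iᶜ.powerset) :
      ∃ T ⊆ I, ∑ J ∈ (T ∪ K).powerset, c J ≠ 0 := by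
    refine exists_subset_sum_powerset_union_ne_zero c ?_ hI
      fun J hIJ _ hJI => hmax J (ssubset_of_ne_of_subset hJI.symm hIJ)
    exact disjoint_right.mpr fun _ h => mem_compl.mp (mem_powerset.mp hK h)
  choose! T hTI hT using hext
  have hpow : #Iᶜ.powerset = 2 ^ (n - #I) := by
    rw [card_powerset, card_compl, Fintype.card_fin]
  rw [← hpow]
  refine card_le_card_of_injOn (fun K i => decide (i ∈ T K ∪ K)) (fun K hK => ?_) ?_
  · simpa only [coe_filter, mem_univ, true_and, Set.mem_ofPred_eq, mEval_indicator]
      using hT K hK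
  · intro K hK K' hK' h
    ext i
    by_cases hi : i ∈ I
    · simp only [mem_coe, mem_powerset, subset_iff, mem_compl] at hK hK'
      exact iff_of_false (fun h => hK h hi) (fun h => hK' h hi)
    · have hiT : ∀ K ∈ Iᶜ.powerset, i ∉ T K := fun K hK h => hi (hTI K hK h)
      simpa [hiT K hK, hiT K' hK'] using congrFun h i

theorem two_pow_le_two_pow_mul_card_mEval_ne_zero {d : ℕ} (c : Finset (Fin n) → G)
    (hc : c ≠ 0) (hd : ∀ I, c I ≠ 0 → #I ≤ d) :
    2 ^ n ≤ 2 ^ d * Nat.card {x : Fin n → Bool | mEval c x ≠ 0} := by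
  classical
  obtain ⟨I₀, hI₀⟩ := Function.ne_iff.mp hc
  obtain ⟨I, hI, hImax⟩ := exists_max_image {J | c J ≠ 0} card ⟨I₀, by simpa using hI₀⟩
  have hcI : c I ≠ 0 := (mem_filter.mp hI).2
  have hmax (J : Finset (Fin n)) (hIJ : I ⊂ J) : c J = 0 := by
    by_contra hJ
    exact (card_lt_card hIJ).not_ge (hImax J (by simpa using hJ))
  calc 2 ^ n = 2 ^ #I * 2 ^ (n - #I) := by
        rw [← pow_add, Nat.add_sub_cancel' (by simpa using card_le_univ I)]
    _ ≤ 2 ^ d * Nat.card {x : Fin n → Bool | mEval c x ≠ 0} :=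
        Nat.mul_le_mul (Nat.pow_le_pow_right two_pos (hd I hcI))
          (two_pow_sub_card_le_card_mEval_ne_zero c hcI hmax)

theorem two_pow_le_two_pow_mul_card_mEval_ne {d : ℕ} {p q : Finset (Fin n) → G}
    (hp : ∀ I, p I ≠ 0 → #I ≤ d) (hq : ∀ I, q I ≠ 0 → #I ≤ d) (hpq : p ≠ q) :
    2 ^ n ≤ 2 ^ d * Nat.card {x : Fin n → Bool | mEval p x ≠ mEval q x} := by
  have hd : ∀ I, (p - q) I ≠ 0 → #I ≤ d := fun I hI => by
    by_cases h : p I = 0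
    · exact hq I fun h' => hI (by simp [h, h'])
    · exact hp I h
  simpa only [mEval_sub, sub_ne_zero] using
    two_pow_le_two_pow_mul_card_mEval_ne_zero (p - q) (sub_ne_zero.mpr hpq) hd

theorem eq_of_lt_card_mEval_eq {d : ℕ} (f : (Fin n → Bool) → G) {p q : Finset (Fin n) → G}
    (hp : ∀ I, p I ≠ 0 → #I ≤ d) (hq : ∀ I, q I ≠ 0 → #I ≤ d)
    (hfp : (1 - 1 / 2 ^ (d + 1)) * 2 ^ n <
      (Nat.card {x : Fin n → Bool | f x = mEval p x} : ℚ))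
    (hfq : (1 - 1 / 2 ^ (d + 1)) * 2 ^ n <
      (Nat.card {x : Fin n → Bool | f x = mEval q x} : ℚ)) :
    p = q := by
  classical
  by_contra hpq
  have hD := two_pow_le_two_pow_mul_card_mEval_ne hp hq hpq
  have hsum := card_add_card_add_card_le_two_mul_card {x | f x = mEval p x}
    {x | f x = mEval q x} {x | mEval p x ≠ mEval q x} <| disjoint_left.mpr fun x hx hne => by
      simp only [mem_inter, mem_filter, mem_univ, true_and] at hx
      exact (mem_filter.mp hne).2 (hx.1 ▸ hx.2)
  simp only [Nat.card_eq_fintype_card, Fintype.card_ofFinset, Set.mem_ofPred_eq] at hfp hfq hD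
  rw [Fintype.card_fun, Fintype.card_bool, Fintype.card_fin] at hsum
  have ht : (0 : ℚ) < 2 ^ d := by positivity
  rw [pow_succ, one_sub_div (by positivity), div_mul_eq_mul_div, div_lt_iff₀ (by positivity)]
    at hfp hfq
  qify at hD hsum
  nlinarith [mul_le_mul_of_nonneg_left hsum ht.le]

end MultilinearPolynomial

/-- Two distinct degree-`d` multilinear polynomials differ on at least a `2^(-d)`
fraction of `{0,1}^n`; consequently any `f` agrees with at most one degree-`d`
polynomial on strictly more than a `1 - 2^(-(d+1))` fraction of points. -/
theorem stmt_2 (n d : ℕ) (G : Type*) [AddCommGroup G] :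
    (∀ p q : Finset (Fin n) → G,
      (∀ I, p I ≠ 0 → I.card ≤ d) → (∀ I, q I ≠ 0 → I.card ≤ d) → p ≠ q →
      2 ^ n ≤ 2 ^ d * Nat.card {x : Fin n → Bool | mEval p x ≠ mEval q x}) ∧
    (∀ f : (Fin n → Bool) → G, ∀ p q : Finset (Fin n) → G,
      (∀ I, p I ≠ 0 → I.card ≤ d) → (∀ I, q I ≠ 0 → I.card ≤ d) →
      (1 - 1 / 2 ^ (d + 1)) * 2 ^ n <
        (Nat.card {x : Fin n → Bool | f x = mEval p x} : ℚ) →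
      (1 - 1 / 2 ^ (d + 1)) * 2 ^ n <
        (Nat.card {x : Fin n → Bool | f x = mEval q x} : ℚ) →
      p = q) :=
  ⟨fun _ _ => two_pow_le_two_pow_mul_card_mEval_ne, eq_of_lt_card_mEval_eq⟩
end

section
/- For every natural number k ≥ 1, there exists a (2^k − 1) × (2k − 1) matrix A_k with entries in {0,1} and a vector c ∈ ℤ^{2k−1} such that: (1) A_k c equals the all-ones vector 1^{2^k−1}; (2) exactly one row of A_k is the all-ones row (1,...,1); (3) the sum of the entries of c equals 1; and (4) every column of A_k has Hamming weight in the interval [2^{k−1} − 1, 2^{k−1} + 1]. -/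
/-!
Write `n = k - 1`. Index the rows by `x < 2^n` and `y < 2^n - 1`, the columns by one extra
column and two blocks of `n` bit positions. Row `x` is `(1, bits x, bits x)`, row `y` is
`(0, bits (y + 1), bits y)`, and `c = (1, 2^j, -2^j)`, so every row of `A c` equals
`1 + x - x` or `(y + 1) - y`. Exactly half of the numbers below `2^n` have a given bit set,
which makes the column weights `2^n`, `2^n` and `2^n - 1`; the only all-ones row is
`x = 2^n - 1`.
-/

open Finset Matrix

namespace Nat

theorem sum_range_toNat_testBit_mul_two_pow {t x : ℕ} (hx : x < 2 ^ t) :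
    ∑ j ∈ range t, (x.testBit j).toNat * 2 ^ j = x := by
  induction t generalizing x with
  | zero => simp_all
  | succ t ih =>
    have hx2 : x / 2 < 2 ^ t := by rw [pow_succ] at hx; omega
    simp only [sum_range_succ', testBit_add_one, pow_succ, ← mul_assoc, ← sum_mul, ih hx2,
      testBit_zero, pow_zero, mul_one]
    by_cases h : x % 2 = 1 <;> simp [h] <;> omega

theorem two_mul_sum_range_toNat_testBit {n j : ℕ} (hj : j < n) :
    2 * ∑ x ∈ range (2 ^ n), (x.testBit j).toNat = 2 ^ n := by
  induction n with
  | zero => omega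
  | succ n ih =>
    rw [pow_succ, mul_two, sum_range_add]
    rcases (Nat.lt_succ_iff.mp hj).lt_or_eq with hj | rfl
    · simp only [testBit_two_pow_add_gt hj]
      omega
    · have hlow : ∀ x ∈ range (2 ^ j), x.testBit j = false :=
        fun x hx => testBit_lt_two_pow (mem_range.mp hx)
      simp +contextual [testBit_two_pow_add_eq, hlow, two_mul]

theorem eq_two_pow_sub_one_of_testBit {n x : ℕ} (hx : x < 2 ^ n) (h : ∀ j < n, x.testBit j) :
    x = 2 ^ n - 1 := by
  refine eq_of_testBit_eq fun j => ?_
  rw [testBit_two_pow_sub_one]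
  by_cases hj : j < n
  · simp [h j hj, hj]
  · simp [hj, testBit_lt_two_pow (hx.trans_le (pow_le_pow_right₀ one_le_two (not_lt.mp hj)))]

theorem sum_fin_toNat_testBit_mul_two_pow {R : Type*} [CommSemiring R] {n x : ℕ}
    (hx : x < 2 ^ n) : ∑ j : Fin n, ((x.testBit j).toNat : R) * 2 ^ (j : ℕ) = x := by
  rw [Fin.sum_univ_eq_sum_range (fun j => ((x.testBit j).toNat : R) * 2 ^ j)]
  conv_rhs => rw [← sum_range_toNat_testBit_mul_two_pow hx]
  push_cast
  rfl

end Nat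

def bitMatrix (n : ℕ) : Matrix (Fin (2 ^ n) ⊕ Fin (2 ^ n - 1)) (Fin 1 ⊕ Fin n ⊕ Fin n) ℤ
  | .inl _, .inl _ => 1
  | .inl x, .inr (.inl j) => ((x : ℕ).testBit j).toNat
  | .inl x, .inr (.inr j) => ((x : ℕ).testBit j).toNat
  | .inr _, .inl _ => 0
  | .inr y, .inr (.inl j) => ((y + 1 : ℕ).testBit j).toNat
  | .inr y, .inr (.inr j) => ((y : ℕ).testBit j).toNat

def bitCoeffs (n : ℕ) : Fin 1 ⊕ Fin n ⊕ Fin n → ℤ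
  | .inl _ => 1
  | .inr (.inl j) => 2 ^ (j : ℕ)
  | .inr (.inr j) => -2 ^ (j : ℕ)

theorem bitMatrix_eq_zero_or_eq_one (n : ℕ) (i j) : bitMatrix n i j = 0 ∨ bitMatrix n i j = 1 := by
  rcases i with _ | _ <;> rcases j with _ | _ | _ <;> simp [bitMatrix]

theorem sum_bitCoeffs (n : ℕ) : ∑ j, bitCoeffs n j = 1 := by
  simp [Fintype.sum_sum_type, bitCoeffs]

theorem bitMatrix_mulVec_bitCoeffs (n : ℕ) : bitMatrix n *ᵥ bitCoeffs n = 1 := by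
  ext (x | y)
  · simp [mulVec, dotProduct, Fintype.sum_sum_type, bitMatrix, bitCoeffs]
  · simp only [mulVec, dotProduct, Fintype.sum_sum_type, bitMatrix, bitCoeffs, mul_neg,
      sum_neg_distrib]
    rw [Nat.sum_fin_toNat_testBit_mul_two_pow (by omega),
      Nat.sum_fin_toNat_testBit_mul_two_pow (by omega)]
    simp

theorem bitMatrix_existsUnique_row_eq_one (n : ℕ) : ∃! i, ∀ j, bitMatrix n i j = 1 := by
  have hpos : 0 < 2 ^ n := Nat.two_pow_pos n
  refine ⟨.inl ⟨2 ^ n - 1, by omega⟩, ?_, ?_⟩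
  · rintro (_ | _ | j) <;> simp [bitMatrix, Nat.testBit_two_pow_sub_one]
  · rintro (x | y) h
    · have hbits : ∀ j < n, (x : ℕ).testBit j := fun j hj => by
        simpa [bitMatrix] using h (.inr (.inl ⟨j, hj⟩))
      simp [Fin.ext_iff, Nat.eq_two_pow_sub_one_of_testBit x.2 hbits]
    · simpa [bitMatrix] using h (.inl 0)

theorem bitMatrix_sum_inl (n : ℕ) (j : Fin 1) : ∑ i, bitMatrix n i (.inl j) = 2 ^ n := by
  simp [Fintype.sum_sum_type, bitMatrix]

theorem bitMatrix_sum_inr_inl {n : ℕ} (j : Fin n) :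
    ∑ i, bitMatrix n i (.inr (.inl j)) = 2 ^ n := by
  have hcount : ∑ x ∈ range (2 ^ n), (x.testBit j).toNat +
      ∑ y ∈ range (2 ^ n - 1), ((y + 1).testBit j).toNat = 2 ^ n := by
    have hshift := sum_range_succ' (fun y => (y.testBit j).toNat) (2 ^ n - 1)
    rw [Nat.sub_add_cancel (Nat.two_pow_pos n)] at hshift
    have hhalf := Nat.two_mul_sum_range_toNat_testBit j.2
    simp only [Nat.zero_testBit, Bool.toNat_false, add_zero] at hshift
    omega
  simp only [Fintype.sum_sum_type, bitMatrix]
  rw [Fin.sum_univ_eq_sum_range (fun x => ((x.testBit j).toNat : ℤ)),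
    Fin.sum_univ_eq_sum_range (fun y => (((y + 1).testBit j).toNat : ℤ))]
  exact_mod_cast hcount

theorem bitMatrix_sum_inr_inr {n : ℕ} (j : Fin n) :
    ∑ i, bitMatrix n i (.inr (.inr j)) = 2 ^ n - 1 := by
  have hcount : ∑ x ∈ range (2 ^ n), (x.testBit j).toNat +
      ∑ y ∈ range (2 ^ n - 1), (y.testBit j).toNat + 1 = 2 ^ n := by
    have hlast := sum_range_succ (fun y => (y.testBit j).toNat) (2 ^ n - 1)
    rw [Nat.sub_add_cancel (Nat.two_pow_pos n)] at hlast
    have hhalf := Nat.two_mul_sum_range_toNat_testBit j.2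
    simp only [Nat.testBit_two_pow_sub_one, j.2, decide_true, Bool.toNat_true] at hlast
    omega
  simp only [Fintype.sum_sum_type, bitMatrix]
  rw [Fin.sum_univ_eq_sum_range (fun x => ((x.testBit j).toNat : ℤ)),
    Fin.sum_univ_eq_sum_range (fun y => ((y.testBit j).toNat : ℤ)), eq_sub_iff_add_eq]
  exact_mod_cast hcount

theorem bitMatrix_sum_col_near_two_pow {n : ℕ} (j : Fin 1 ⊕ Fin n ⊕ Fin n) :
    2 ^ n - 1 ≤ ∑ i, bitMatrix n i j ∧ ∑ i, bitMatrix n i j ≤ 2 ^ n + 1 := by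
  rcases j with j | j | j <;>
    simp only [bitMatrix_sum_inl, bitMatrix_sum_inr_inl, bitMatrix_sum_inr_inr] <;>
    constructor <;> linarith

/-- The conclusion of the theorem for arbitrary finite index types, with `n = k - 1`. -/
def IsBalancedOnesRepresentation {R C : Type*} [Fintype R] [Fintype C] (n : ℕ)
    (A : Matrix R C ℤ) (c : C → ℤ) : Prop :=
  (∀ i j, A i j = 0 ∨ A i j = 1) ∧ A *ᵥ c = 1 ∧ (∃! i, ∀ j, A i j = 1) ∧ ∑ j, c j = 1 ∧
    ∀ j, (2 : ℤ) ^ n - 1 ≤ ∑ i, A i j ∧ ∑ i, A i j ≤ 2 ^ n + 1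

theorem IsBalancedOnesRepresentation.reindex {R C R' C' : Type*} [Fintype R] [Fintype C]
    [Fintype R'] [Fintype C'] {n : ℕ} {A : Matrix R C ℤ} {c : C → ℤ}
    (h : IsBalancedOnesRepresentation n A c) (e : R ≃ R') (f : C ≃ C') :
    IsBalancedOnesRepresentation n (A.reindex e f) (c ∘ f.symm) := by
  obtain ⟨hA01, hmul, hrow, hc, hcol⟩ := h
  refine ⟨fun i j => hA01 _ _, ?_, ?_, ?_, fun j => ?_⟩
  · simp only [reindex_apply, submatrix_mulVec_equiv, Equiv.symm_symm, Function.comp_assoc,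
      Equiv.symm_comp_self, Function.comp_id, hmul]
    rfl
  · refine (e.existsUnique_congr fun i => ?_).mp hrow
    simp only [reindex_apply, submatrix_apply, Equiv.symm_apply_apply]
    exact f.symm.forall_congr_right.symm
  · exact (f.symm.sum_comp c).trans hc
  · simpa [e.symm.sum_comp (fun i => A i (f.symm j))] using hcol (f.symm j)

theorem isBalancedOnesRepresentation_bitMatrix (n : ℕ) :
    IsBalancedOnesRepresentation n (bitMatrix n) (bitCoeffs n) :=
  ⟨bitMatrix_eq_zero_or_eq_one n, bitMatrix_mulVec_bitCoeffs n,
    bitMatrix_existsUnique_row_eq_one n, sum_bitCoeffs n, bitMatrix_sum_col_near_two_pow⟩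

/-- Construction of a nearly-balanced `{0,1}`-matrix whose columns span the all-ones
vector with integer coefficients summing to `1`, and with exactly one all-ones row. -/
theorem stmt_4 (k : ℕ) (hk : 1 ≤ k) :
    ∃ (A : Matrix (Fin (2 ^ k - 1)) (Fin (2 * k - 1)) ℤ) (c : Fin (2 * k - 1) → ℤ),
      (∀ i j, A i j = 0 ∨ A i j = 1) ∧
      A.mulVec c = (fun _ => 1) ∧
      (∃! i, ∀ j, A i j = 1) ∧
      (∑ j, c j) = 1 ∧
      (∀ j, (2 : ℤ) ^ (k - 1) - 1 ≤ ∑ i, A i j ∧ ∑ i, A i j ≤ 2 ^ (k - 1) + 1) := by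
  obtain ⟨n, rfl⟩ : ∃ n, k = n + 1 := ⟨k - 1, by omega⟩
  have hrows : Fintype.card (Fin (2 ^ n) ⊕ Fin (2 ^ n - 1)) = 2 ^ (n + 1) - 1 := by
    simp only [Fintype.card_sum, Fintype.card_fin, pow_succ]; omega
  have hcols : Fintype.card (Fin 1 ⊕ Fin n ⊕ Fin n) = 2 * (n + 1) - 1 := by
    simp only [Fintype.card_sum, Fintype.card_unique, Fintype.card_fin]; omega
  exact ⟨_, _, (isBalancedOnesRepresentation_bitMatrix n).reindex
    (Fintype.equivFinOfCardEq hrows) (Fintype.equivFinOfCardEq hcols)⟩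
end

section
/- Let A_1, ..., A_k be finite sets, each of cardinality r, with |A_i ∩ A_j| ≤ t for all i ≠ j. Then |A_1 ∪ ... ∪ A_k| ≥ r²k / (r + (k−1)t). -/
/-!
Count incidences through the degree `d x = #{i | x ∈ A i}` of a point `x` of the union `U`.
Then `∑ d x = ∑ |A i| = k r`, while `∑ (d x)² = ∑_{i,j} |A i ∩ A j| ≤ k (r + (k - 1) t)`, and
Cauchy–Schwarz `(∑ d x)² ≤ |U| ∑ (d x)²` gives `k² r² ≤ |U| k (r + (k - 1) t)`.
-/

open Finset

namespace Finset

variable {ι X : Type*} [Fintype ι] [DecidableEq X]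

theorem sum_card_eq_sum_card_filter_mem (A : ι → Finset X) {s : Finset X}
    (hs : ∀ i, A i ⊆ s) : ∑ i, #(A i) = ∑ x ∈ s, #{i | x ∈ A i} := by
  simp_rw [card_eq_sum_ones (filter _ _), sum_filter]
  rw [sum_comm]
  refine sum_congr rfl fun i _ => ?_
  rw [← sum_filter, ← card_eq_sum_ones, filter_mem_eq_inter, inter_eq_right.mpr (hs i)]

theorem sum_sum_card_inter_eq_sum_sq (A : ι → Finset X) {s : Finset X}
    (hs : ∀ i, A i ⊆ s) : ∑ i, ∑ j, #(A i ∩ A j) = ∑ x ∈ s, #{i | x ∈ A i} ^ 2 := by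
  rw [← Fintype.sum_prod_type',
    sum_card_eq_sum_card_filter_mem (fun p : ι × ι => A p.1 ∩ A p.2)
      fun p => inter_subset_left.trans (hs p.1)]
  refine sum_congr rfl fun x _ => ?_
  simp_rw [mem_inter, sq, ← card_product, ← filter_product, univ_product_univ]

theorem sq_sum_card_le_card_biUnion_mul_sum_sum_card_inter (A : ι → Finset X) :
    (∑ i, #(A i)) ^ 2 ≤ #(univ.biUnion A) * ∑ i, ∑ j, #(A i ∩ A j) := by
  have hsub : ∀ i, A i ⊆ univ.biUnion A := fun i => subset_biUnion_of_mem A (mem_univ i)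
  rw [sum_card_eq_sum_card_filter_mem A hsub, sum_sum_card_inter_eq_sum_sq A hsub]
  exact sq_sum_le_card_mul_sum_sq

theorem sum_sum_card_inter_le {A : ι → Finset X} {r t : ℕ} (hcard : ∀ i, #(A i) = r)
    (hint : ∀ i j, i ≠ j → #(A i ∩ A j) ≤ t) :
    ∑ i, ∑ j, #(A i ∩ A j) ≤ Fintype.card ι * (r + (Fintype.card ι - 1) * t) := by
  classical
  have hrow : ∀ i, ∑ j, #(A i ∩ A j) ≤ r + (Fintype.card ι - 1) * t := by
    intro i
    rw [← add_sum_erase _ _ (mem_univ i), inter_self, hcard i]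
    gcongr
    calc ∑ j ∈ univ.erase i, #(A i ∩ A j)
        ≤ #(univ.erase i) * t :=
          sum_le_card_nsmul _ _ _ fun j hj => hint i j (ne_of_mem_erase hj).symm
      _ = (Fintype.card ι - 1) * t := by rw [card_erase_of_mem (mem_univ i), card_univ]
  simpa using sum_le_card_nsmul univ _ _ fun i _ => hrow i

theorem card_mul_sq_le_card_biUnion_mul {A : ι → Finset X} {r t : ℕ}
    (hcard : ∀ i, #(A i) = r)
    (hint : ∀ i j, i ≠ j → #(A i ∩ A j) ≤ t) :
    Fintype.card ι * r ^ 2 ≤ #(univ.biUnion A) * (r + (Fintype.card ι - 1) * t) := by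
  obtain hk | hk := (Fintype.card ι).eq_zero_or_pos
  · simp [hk]
  have hcs := sq_sum_card_le_card_biUnion_mul_sum_sum_card_inter A
  simp only [hcard, sum_const, card_univ, smul_eq_mul] at hcs
  refine Nat.le_of_mul_le_mul_left ?_ hk
  calc Fintype.card ι * (Fintype.card ι * r ^ 2) = (Fintype.card ι * r) ^ 2 := by ring
    _ ≤ #(univ.biUnion A) * (Fintype.card ι * (r + (Fintype.card ι - 1) * t)) :=
      hcs.trans (Nat.mul_le_mul_left _ (sum_sum_card_inter_le hcard hint))
    _ = _ := by ring

end Finset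

theorem stmt_8_general {X : Type*} [DecidableEq X] (k r t : ℕ)
    (A : Fin k → Finset X) (hcard : ∀ i, (A i).card = r)
    (hint : ∀ i j, i ≠ j → ((A i) ∩ (A j)).card ≤ t) :
    ((r : ℚ) ^ 2 * k) / (r + (k - 1) * t) ≤ ((Finset.univ.biUnion A).card : ℚ) := by
  -- `(k - 1 : ℚ)` agrees with the truncated `k - 1 : ℕ` only for `0 < k`.
  obtain rfl | hk := k.eq_zero_or_pos
  · simp
  have key := card_mul_sq_le_card_biUnion_mul hcard hint
  rw [Fintype.card_fin] at key
  have hkQ : ((k - 1 : ℕ) : ℚ) = k - 1 := Nat.cast_pred hk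
  refine div_le_of_le_mul₀ (by rw [← hkQ]; positivity) (Nat.cast_nonneg _) ?_
  rw [← hkQ]
  exact_mod_cast (mul_comm _ _).trans_le key

/-- Jukna's bound: if `A_1, …, A_k` each have cardinality `r` and pairwise
intersections of size at most `t`, then `|A_1 ∪ ⋯ ∪ A_k| ≥ r² k / (r + (k-1) t)`. -/
theorem stmt_8 {X : Type*} [DecidableEq X] (k r t : ℕ) (hk : 0 < k) (hr : 0 < r)
    (A : Fin k → Finset X) (hcard : ∀ i, (A i).card = r)
    (hint : ∀ i j, i ≠ j → ((A i) ∩ (A j)).card ≤ t) :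
    ((r : ℚ) ^ 2 * k) / (r + (k - 1) * t) ≤ ((Finset.univ.biUnion A).card : ℚ) :=
  stmt_8_general k r t A hcard hint
end

section
/- Let G be a finite Abelian group in which every nonzero element has order at least 5, and let P̃(x) = a_0 + Σ_{i=1}^k a_i x_{j_i} be a degree-1 polynomial over G with k distinct variables, all coefficients a_1,...,a_k nonzero. If Pr_{x∼{0,1}^n}[P̃(x) = 0] ≥ 1/4 − 0.001, then k ≤ C_0 for an absolute constant C_0 (C_0 = 4500 suffices). -/
/-!
Count zeros with characters: `#{P = 0} · |G| = ∑_χ ∑_x χ(P x)`, and the inner sum factors as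
`χ(a₀) 2ⁿ ∏ᵢ (1 + χ(aᵢ))/2`. By AM-GM the product of the `k` factors `‖(1 + χ(aᵢ))/2‖ ≤ 1` is at
most their average `k`-th power, and `‖(1 + w)/2‖ ≤ 0.99` unless `Re w > 0.96`. Since
`0, b, …, 4b` are distinct for `b = aᵢ`, Parseval gives `∑_χ |∑_{j<5} χ(b)ʲ|² = 5|G|`, while
`|∑_{j<5} wʲ| = |4 (Re w)² + 2 Re w - 1| ≥ 4.6` when `Re w > 0.96`; so at most a fraction
`5/4.6² < 0.237` of the characters have `Re χ(b) > 0.96`. Hence the zero density of `P` is at most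
`5/4.6² + 0.99ᵏ`, which is below `1/4 - 0.001` once `k > 4500`.
-/

open Finset Function

theorem prod_le_sum_pow_card_div_card {ι : Type*} (s : Finset ι) (hs : s.Nonempty) (x : ι → ℝ)
    (hx : ∀ i ∈ s, 0 ≤ x i) : ∏ i ∈ s, x i ≤ (∑ i ∈ s, x i ^ #s) / #s := by
  have hcard : (#s : ℝ) ≠ 0 := by positivity
  have amgm := Real.geom_mean_le_arith_mean_weighted s (fun _ => (#s : ℝ)⁻¹) (fun i => x i ^ #s)
    (fun _ _ => by positivity) (by simp [hcard]) (fun i hi => pow_nonneg (hx i hi) _)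
  rw [← mul_sum, inv_mul_eq_div] at amgm
  refine le_of_eq_of_le (prod_congr rfl fun i hi => ?_) amgm
  exact (Real.pow_rpow_inv_natCast (hx i hi) hs.card_pos.ne').symm

theorem sum_prod_apply_comp_of_injective {ι κ β K : Type*} [Fintype ι] [Fintype κ]
    [DecidableEq κ] [Fintype β] [Nonempty β] [Field K] [CharZero K] (e : ι → κ)
    (he : Injective e) (g : ι → β → K) :
    ∑ x : κ → β, ∏ i, g i (x (e i))
      = (Fintype.card β : K) ^ Fintype.card κ * ∏ i, (∑ b, g i b) / Fintype.card β := by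
  have hβ : (Fintype.card β : K) ≠ 0 := by simp
  let h : κ → β → K := extend e g fun _ _ => 1
  have h_off : ∀ j ∉ Set.range e, h j = fun _ => 1 :=
    fun j hj => extend_apply' _ _ _ fun ⟨i, hi⟩ => hj ⟨i, hi⟩
  have h_on : ∀ i, h (e i) = g i := he.extend_apply g _
  calc ∑ x : κ → β, ∏ i, g i (x (e i))
      = ∑ x : κ → β, ∏ j, h j (x j) :=
        sum_congr rfl fun x _ => Fintype.prod_of_injective e he _ _
          (fun j hj => by rw [h_off j hj]) fun i => by rw [h_on]
    _ = ∏ j, ((Fintype.card β : K) * ((∑ b, h j b) / Fintype.card β)) := by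
        rw [← Fintype.prod_sum]
        exact prod_congr rfl fun j _ => (mul_div_cancel₀ _ hβ).symm
    _ = _ := by
        rw [prod_mul_distrib, prod_const, card_univ]
        congr 1
        refine (Fintype.prod_of_injective e he _ _ (fun j hj => ?_) fun i => by rw [h_on]).symm
        simp [h_off j hj, hβ]

theorem AddChar.map_sum_eq_prod {A M ι : Type*} [AddCommMonoid A] [CommMonoid M]
    (χ : AddChar A M) (s : Finset ι) (f : ι → A) : χ (∑ i ∈ s, f i) = ∏ i ∈ s, χ (f i) := by
  classical
  induction s using Finset.induction_on with
  | empty => simp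
  | insert i s hi ih => rw [sum_insert hi, prod_insert hi, AddChar.map_add_eq_mul, ih]

theorem norm_one_add_div_two_le_one {w : ℂ} (hw : ‖w‖ = 1) : ‖(1 + w) / 2‖ ≤ 1 := by
  have := norm_add_le 1 w
  rw [norm_one, hw] at this
  rw [norm_div, Complex.norm_ofNat, div_le_one two_pos]
  linarith

theorem norm_one_add_div_two_le_of_re_le {w : ℂ} (hw : ‖w‖ = 1) (hre : w.re ≤ 0.96) :
    ‖(1 + w) / 2‖ ≤ 0.99 := by
  have hunit : w.re ^ 2 + w.im ^ 2 = 1 := by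
    have := Complex.sq_norm w
    rw [hw, Complex.normSq_apply] at this
    nlinarith
  have hsq : ‖(1 + w) / 2‖ ^ 2 = (1 + w.re) / 2 := by
    rw [norm_div, div_pow, ← Complex.normSq_eq_norm_sq, Complex.normSq_apply]
    simp only [Complex.add_re, Complex.one_re, Complex.add_im, Complex.one_im, zero_add,
      Complex.norm_ofNat]
    linear_combination hunit / 4
  nlinarith [norm_nonneg ((1 + w) / 2)]

theorem norm_geom_sum_five {w : ℂ} (hw : ‖w‖ = 1) :
    ‖∑ j ∈ range 5, w ^ j‖ = |4 * w.re ^ 2 + 2 * w.re - 1| := by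
  have hconj : w * (starRingEnd ℂ) w = 1 := by
    rw [Complex.mul_conj', hw]; norm_num
  -- `w⁻¹ = conj w`, so `w⁻² ∑_{j<5} wʲ = ∑_{|j|≤2} wʲ` is the real number `1 + 2 Re w + 2 Re w²`.
  have key : ∑ j ∈ range 5, w ^ j = w ^ 2 * ((4 * w.re ^ 2 + 2 * w.re - 1 : ℝ) : ℂ) := by
    have h2re : ((2 * w.re : ℝ) : ℂ) = w + (starRingEnd ℂ) w := (Complex.add_conj w).symm
    have : ((4 * w.re ^ 2 + 2 * w.re - 1 : ℝ) : ℂ)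
        = ((2 * w.re : ℝ) : ℂ) ^ 2 + ((2 * w.re : ℝ) : ℂ) - 1 := by
      push_cast; ring
    rw [this, h2re]
    simp only [sum_range_succ, sum_range_zero]
    linear_combination (-(2 * w ^ 2 + w + w * (starRingEnd ℂ) w + 1)) * hconj
  rw [key, norm_mul, norm_pow, hw, one_pow, one_mul, Complex.norm_real, Real.norm_eq_abs]

section AddCommGroup

variable {G : Type*} [AddCommGroup G]

theorem card_zeros_mul_card_eq_sum_addChar [Fintype G] [DecidableEq G] {X : Type*} [Fintype X]
    (P : X → G) : (#{x | P x = 0} : ℂ) * Fintype.card G = ∑ χ : AddChar G ℂ, ∑ x, χ (P x) := by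
  rw [sum_comm]
  simp_rw [AddChar.sum_apply_eq_ite, sum_ite, sum_const_zero, add_zero, sum_const, nsmul_eq_mul]

theorem sum_cube_addChar_affine {ι κ : Type*} [Fintype ι] [Fintype κ] [DecidableEq κ]
    (χ : AddChar G ℂ) (a₀ : G) (e : ι → κ) (he : Injective e) (a : ι → G) :
    ∑ x : κ → Bool, χ (a₀ + ∑ i, if x (e i) then a i else 0)
      = χ a₀ * (2 ^ Fintype.card κ * ∏ i, (1 + χ (a i)) / 2) := by
  have hχ : ∀ x : κ → Bool, χ (a₀ + ∑ i, if x (e i) then a i else 0)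
      = χ a₀ * ∏ i, (if x (e i) then χ (a i) else 1) := by
    intro x
    rw [AddChar.map_add_eq_mul, AddChar.map_sum_eq_prod]
    congr 1
    exact prod_congr rfl fun i _ => by split_ifs <;> simp
  rw [sum_congr rfl fun x _ => hχ x, ← mul_sum,
    sum_prod_apply_comp_of_injective e he fun i (b : Bool) => if b then χ (a i) else 1]
  simp [add_comm]

theorem card_affine_zeros_mul_card_le [Fintype G] [DecidableEq G] {ι κ : Type*} [Fintype ι]
    [Fintype κ] [DecidableEq κ] (a₀ : G) (e : ι → κ) (he : Injective e) (a : ι → G) :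
    (#{x : κ → Bool | a₀ + ∑ i, (if x (e i) then a i else 0) = 0} : ℝ) * Fintype.card G
      ≤ 2 ^ Fintype.card κ * ∑ χ : AddChar G ℂ, ∏ i, ‖(1 + χ (a i)) / 2‖ := by
  calc (#{x : κ → Bool | a₀ + ∑ i, (if x (e i) then a i else 0) = 0} : ℝ) * Fintype.card G
      = ‖(#{x : κ → Bool | a₀ + ∑ i, (if x (e i) then a i else 0) = 0} : ℂ)
          * Fintype.card G‖ := by
        rw [norm_mul, Complex.norm_natCast, Complex.norm_natCast]
    _ = ‖∑ χ : AddChar G ℂ, χ a₀ * (2 ^ Fintype.card κ * ∏ i, (1 + χ (a i)) / 2)‖ := by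
        rw [card_zeros_mul_card_eq_sum_addChar]
        simp_rw [sum_cube_addChar_affine _ a₀ e he a]
    _ ≤ ∑ χ : AddChar G ℂ, ‖χ a₀ * (2 ^ Fintype.card κ * ∏ i, (1 + χ (a i)) / 2)‖ :=
        norm_sum_le _ _
    _ = _ := by
        simp only [norm_mul, AddChar.norm_apply, norm_pow, norm_prod, one_mul, mul_sum]
        norm_num

variable [Fintype G]

theorem sum_addChar_norm_sq_sum_of_injOn {ι : Type*} (s : Finset ι) (f : ι → G)
    (hf : Set.InjOn f s) :
    ∑ χ : AddChar G ℂ, ‖∑ i ∈ s, χ (f i)‖ ^ 2 = #s * Fintype.card G := by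
  classical
  have hnorm : ∀ χ : AddChar G ℂ,
      ((‖∑ i ∈ s, χ (f i)‖ ^ 2 : ℝ) : ℂ) = ∑ i ∈ s, ∑ j ∈ s, χ (f i - f j) := by
    intro χ
    rw [Complex.ofReal_pow, ← Complex.mul_conj', map_sum, sum_mul_sum]
    simp_rw [← AddChar.map_neg_eq_conj, ← AddChar.map_add_eq_mul, sub_eq_add_neg]
  have hdiag : ∀ i ∈ s, ∑ j ∈ s, ∑ χ : AddChar G ℂ, χ (f i - f j) = Fintype.card G := by
    intro i hi
    rw [sum_congr rfl fun j hj => by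
      rw [AddChar.sum_apply_eq_ite, sub_eq_zero, hf.eq_iff hi hj], sum_ite_eq, if_pos hi]
  apply Complex.ofReal_injective
  rw [Complex.ofReal_sum, sum_congr rfl fun χ _ => hnorm χ, sum_comm]
  simp_rw [sum_comm (γ := AddChar G ℂ)]
  rw [sum_congr rfl hdiag, sum_const, nsmul_eq_mul]
  norm_cast

theorem card_addChar_re_gt_mul_le (b : G) (hb : 5 ≤ addOrderOf b) :
    (#{χ : AddChar G ℂ | 0.96 < (χ b).re} : ℝ) * 4.6 ^ 2 ≤ 5 * Fintype.card G := by
  have hinj : Set.InjOn (fun j : ℕ => j • b) (range 5) := fun i hi j hj hij =>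
    nsmul_injOn_Iio_addOrderOf ((mem_range.1 hi).trans_le hb) ((mem_range.1 hj).trans_le hb) hij
  have hparseval := sum_addChar_norm_sq_sum_of_injOn _ _ hinj
  simp only [AddChar.map_nsmul_eq_pow, card_range, Nat.cast_ofNat] at hparseval
  have hbig : ∀ χ ∈ (univ.filter fun χ : AddChar G ℂ => 0.96 < (χ b).re),
      (4.6 : ℝ) ^ 2 ≤ ‖∑ j ∈ range 5, χ b ^ j‖ ^ 2 := by
    intro χ hχ
    have hre := (mem_filter.1 hχ).2
    rw [norm_geom_sum_five (χ.norm_apply b), sq_abs]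
    have : (4.6 : ℝ) ≤ 4 * (χ b).re ^ 2 + 2 * (χ b).re - 1 := by nlinarith
    exact pow_le_pow_left₀ (by norm_num) this 2
  calc (#{χ : AddChar G ℂ | 0.96 < (χ b).re} : ℝ) * 4.6 ^ 2
      ≤ ∑ χ ∈ (univ.filter fun χ : AddChar G ℂ => 0.96 < (χ b).re),
          ‖∑ j ∈ range 5, χ b ^ j‖ ^ 2 := by
        rw [← nsmul_eq_mul]; exact card_nsmul_le_sum _ _ _ hbig
    _ ≤ ∑ χ : AddChar G ℂ, ‖∑ j ∈ range 5, χ b ^ j‖ ^ 2 :=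
        sum_le_sum_of_subset_of_nonneg (subset_univ _) fun _ _ _ => sq_nonneg _
    _ = 5 * Fintype.card G := hparseval

theorem sum_addChar_norm_pow_le (b : G) (hb : 5 ≤ addOrderOf b) (m : ℕ) :
    ∑ χ : AddChar G ℂ, ‖(1 + χ b) / 2‖ ^ m ≤ (5 / 4.6 ^ 2 + 0.99 ^ m) * Fintype.card G := by
  have hpt : ∀ χ : AddChar G ℂ,
      ‖(1 + χ b) / 2‖ ^ m ≤ (if 0.96 < (χ b).re then 1 else 0) + 0.99 ^ m := by
    intro χ
    have hχ := χ.norm_apply b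
    split_ifs with hre
    · have := pow_le_one₀ (norm_nonneg _) (norm_one_add_div_two_le_one hχ) (n := m)
      linarith [pow_nonneg (show (0 : ℝ) ≤ 0.99 by norm_num) m]
    · rw [zero_add]
      exact pow_le_pow_left₀ (norm_nonneg _) (norm_one_add_div_two_le_of_re_le hχ (not_lt.1 hre)) m
  calc ∑ χ : AddChar G ℂ, ‖(1 + χ b) / 2‖ ^ m
      ≤ ∑ χ : AddChar G ℂ, ((if 0.96 < (χ b).re then 1 else 0) + 0.99 ^ m) :=
        sum_le_sum fun χ _ => hpt χ
    _ = #{χ : AddChar G ℂ | 0.96 < (χ b).re} + 0.99 ^ m * Fintype.card G := by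
        rw [sum_add_distrib, sum_boole, sum_const, card_univ, AddChar.card_eq, nsmul_eq_mul,
          mul_comm]
    _ ≤ _ := by
        rw [add_mul, div_mul_eq_mul_div]
        gcongr
        rw [le_div_iff₀ (by norm_num)]
        exact card_addChar_re_gt_mul_le b hb

theorem sum_addChar_prod_norm_le {ι : Type*} [Fintype ι] [Nonempty ι] (a : ι → G)
    (ha : ∀ i, 5 ≤ addOrderOf (a i)) :
    ∑ χ : AddChar G ℂ, ∏ i, ‖(1 + χ (a i)) / 2‖
      ≤ (5 / 4.6 ^ 2 + 0.99 ^ Fintype.card ι) * Fintype.card G := by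
  have hι : (Fintype.card ι : ℝ) ≠ 0 := by positivity
  calc ∑ χ : AddChar G ℂ, ∏ i, ‖(1 + χ (a i)) / 2‖
      ≤ ∑ χ : AddChar G ℂ, (∑ i, ‖(1 + χ (a i)) / 2‖ ^ Fintype.card ι) / Fintype.card ι :=
        sum_le_sum fun χ _ =>
          prod_le_sum_pow_card_div_card univ univ_nonempty _ fun _ _ => norm_nonneg _
    _ = (∑ i, ∑ χ : AddChar G ℂ, ‖(1 + χ (a i)) / 2‖ ^ Fintype.card ι) / Fintype.card ι := by
        rw [← sum_div, sum_comm]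
    _ ≤ (∑ _i : ι, ((5 : ℝ) / 4.6 ^ 2 + 0.99 ^ Fintype.card ι) * Fintype.card G)
          / Fintype.card ι := by
        gcongr with i
        exact sum_addChar_norm_pow_le _ (ha i) _
    _ = _ := by
        rw [sum_const, card_univ, nsmul_eq_mul, mul_div_cancel_left₀ _ hι]

end AddCommGroup

/-- Anti-concentration: over a finite abelian group in which every nonzero element has
order at least 5, a degree-1 polynomial with `k` nonzero coefficients on distinct
variables that vanishes on at least a `1/4 - 0.001` fraction of the cube has
`k ≤ 4500`. -/
theorem stmt_11 (G : Type*) [AddCommGroup G] [Fintype G]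
    (hG : ∀ g : G, g ≠ 0 → 5 ≤ addOrderOf g)
    (n k : ℕ) (a0 : G) (jv : Fin k → Fin n) (hinj : Function.Injective jv)
    (a : Fin k → G) (ha : ∀ i, a i ≠ 0)
    (h : ((1 : ℝ) / 4 - 0.001) * 2 ^ n ≤
      (Nat.card {x : Fin n → Bool |
        a0 + ∑ i, (if x (jv i) then a i else 0) = 0} : ℝ)) :
    k ≤ 4500 := by
  classical
  by_contra! hk
  have : Nonempty (Fin k) := ⟨⟨0, by omega⟩⟩
  have hzeros := card_affine_zeros_mul_card_le a0 jv hinj a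
  have hchar := sum_addChar_prod_norm_le a fun i => hG _ (ha i)
  rw [Fintype.card_fin] at hzeros hchar
  rw [Nat.card_eq_card_toFinset, Set.toFinset_ofPred] at h
  have hN : (0 : ℝ) < Fintype.card G := by exact_mod_cast Fintype.card_pos
  have hdensity : (#{x : Fin n → Bool | a0 + ∑ i, (if x (jv i) then a i else 0) = 0} : ℝ)
      ≤ 2 ^ n * (5 / 4.6 ^ 2 + 0.99 ^ k) := by
    refine le_of_mul_le_mul_right (hzeros.trans ?_) hN
    rw [mul_assoc]
    gcongr
  have hsmall : (0.99 : ℝ) ^ k ≤ 0.367 ^ 5 := calc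
    (0.99 : ℝ) ^ k ≤ 0.99 ^ (100 * 5) := pow_le_pow_of_le_one (by norm_num) (by norm_num) (by omega)
    _ = (0.99 ^ 100) ^ 5 := pow_mul _ _ _
    _ ≤ 0.367 ^ 5 := by gcongr; norm_num
  have hlt : (5 : ℝ) / 4.6 ^ 2 + 0.99 ^ k < 1 / 4 - 0.001 := by
    have : (5 : ℝ) / 4.6 ^ 2 + 0.367 ^ 5 < 1 / 4 - 0.001 := by norm_num
    linarith
  linarith [mul_lt_mul_of_pos_left hlt (by positivity : (0 : ℝ) < 2 ^ n)]
end

section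
/- Let G be an Abelian group and f : {0,1}^n → G. Suppose P_1, ..., P_k are degree-1 polynomials over G, each agreeing with f on at least a 1/2 fraction of {0,1}^n, and pairwise agreeing on at most a (1/4 − 0.001) fraction of {0,1}^n. Then k ≤ 4002. -/
/-- Evaluation of a degree-1 polynomial `p = (a₀, a)` over `G` at a Boolean point. -/
def linEval {n : ℕ} {G : Type*} [AddCommGroup G] (p : G × (Fin n → G))
    (x : Fin n → Bool) : G :=
  p.1 + ∑ i, if x i then p.2 i else 0

/-!
Second-moment counting. Let `A i` be the set where `f` agrees with `P i`. Double counting and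
Cauchy–Schwarz give `(∑ |A i|)² ≤ 2ⁿ ∑_{i,j} |A i ∩ A j|`. Since `A i ∩ A j` lies in the agreement
set of `P i` and `P j`, the off-diagonal terms are at most `(1/4 - ε) 2ⁿ` and the diagonal ones at
most `2ⁿ`; together with `|A i| ≥ 2ⁿ⁻¹` this forces `(k - 1) ε ≤ 3/4`, so `k ≤ 751` for `ε = 0.001`.
-/

section

open Finset

variable {ι α K : Type*} [Fintype α] [DecidableEq α]

theorem Finset.sq_sum_card_le_card_mul_sum_card_inter (s : Finset ι) (A : ι → Finset α) :
    (∑ i ∈ s, #(A i)) ^ 2 ≤ Fintype.card α * ∑ i ∈ s, ∑ j ∈ s, #(A i ∩ A j) := by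
  set d : α → ℕ := fun x ↦ ∑ i ∈ s, if x ∈ A i then 1 else 0
  have hsum : ∑ i ∈ s, #(A i) = ∑ x, d x := by
    simp only [d, card_eq_sum_ite (t := univ), subset_univ]
    exact sum_comm
  have hsq : ∑ i ∈ s, ∑ j ∈ s, #(A i ∩ A j) = ∑ x, d x ^ 2 := by
    simp only [d, sq, sum_mul_sum, card_eq_sum_ite (t := univ), subset_univ, mem_inter,
      ite_zero_mul_ite_zero, mul_one]
    symm
    rw [sum_comm]
    exact sum_congr rfl fun i _ ↦ sum_comm
  rw [hsum, hsq]
  exact sq_sum_le_card_mul_sum_sq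

variable [Fintype ι] [Field K] [LinearOrder K] [IsStrictOrderedRing K]

theorem sum_card_inter_le_of_pairwise_card_inter_le [DecidableEq ι] (A : ι → Finset α) {t : K}
    (ht : ∀ i j, i ≠ j → (#(A i ∩ A j) : K) ≤ t) (i : ι) :
    ∑ j, (#(A i ∩ A j) : K) ≤ Fintype.card α + (Fintype.card ι - 1) * t := by
  have hdiag : (#(A i) : K) ≤ Fintype.card α := by exact_mod_cast card_le_univ _
  have hoff : ∑ j ∈ univ.erase i, (#(A i ∩ A j) : K) ≤ (Fintype.card ι - 1) * t :=
    calc ∑ j ∈ univ.erase i, (#(A i ∩ A j) : K)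
        ≤ ∑ _j ∈ univ.erase i, t := sum_le_sum fun j hj ↦ ht i j (ne_of_mem_erase hj).symm
      _ = (Fintype.card ι - 1) * t := by
        rw [sum_const, card_erase_of_mem (mem_univ i), card_univ, nsmul_eq_mul,
          Nat.cast_pred (Fintype.card_pos_iff.2 ⟨i⟩)]
  rw [← add_sum_erase _ _ (mem_univ i), inter_self]
  linarith

theorem sq_card_mul_le_of_pairwise_card_inter_le (A : ι → Finset α) {r t : K} (hr₀ : 0 ≤ r)
    (hr : ∀ i, r ≤ #(A i)) (ht : ∀ i j, i ≠ j → (#(A i ∩ A j) : K) ≤ t) :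
    (Fintype.card ι * r) ^ 2 ≤
      Fintype.card α * (Fintype.card ι * (Fintype.card α + (Fintype.card ι - 1) * t)) := by
  classical
  have hCS : (∑ i, (#(A i) : K)) ^ 2 ≤ Fintype.card α * ∑ i, ∑ j, (#(A i ∩ A j) : K) := by
    exact_mod_cast sq_sum_card_le_card_mul_sum_card_inter univ A
  calc ((Fintype.card ι : K) * r) ^ 2 ≤ (∑ i, (#(A i) : K)) ^ 2 := by
        gcongr
        simpa using card_nsmul_le_sum univ _ r fun i _ ↦ hr i
    _ ≤ Fintype.card α * ∑ i, ∑ j, (#(A i ∩ A j) : K) := hCS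
    _ ≤ Fintype.card α * ∑ _i : ι, (Fintype.card α + (Fintype.card ι - 1) * t) := by
        gcongr with i
        exact sum_card_inter_le_of_pairwise_card_inter_le A ht i
    _ = _ := by rw [sum_const, card_univ, nsmul_eq_mul]

theorem card_sub_one_mul_le_of_half_dense [Nonempty ι] [Nonempty α] (A : ι → Finset α) {ε : K}
    (hA : ∀ i, (Fintype.card α : K) ≤ 2 * #(A i))
    (ht : ∀ i j, i ≠ j → (#(A i ∩ A j) : K) ≤ (1 / 4 - ε) * Fintype.card α) :
    ((Fintype.card ι : K) - 1) * ε ≤ 3 / 4 := by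
  set k : K := (Fintype.card ι : K)
  set N : K := (Fintype.card α : K)
  have hk : 0 < k := by simp [k, Fintype.card_pos]
  have hN : 0 < N := by simp [N, Fintype.card_pos]
  have h := sq_card_mul_le_of_pairwise_card_inter_le A (r := N / 2) (by positivity)
    (fun i ↦ by linarith [hA i]) ht
  have : k * N ^ 2 * ((k - 1) * ε - 3 / 4) ≤ 0 := by linarith
  linarith [nonpos_of_mul_nonpos_right this (by positivity)]

theorem card_sub_one_mul_le_of_half_agree {β : Type*} [DecidableEq β] [Nonempty ι] [Nonempty α]
    (f : α → β) (g : ι → α → β) {ε : K}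
    (hagree : ∀ i, (Fintype.card α : K) ≤ 2 * #{x | f x = g i x})
    (hpair : ∀ i j, i ≠ j → (#{x | g i x = g j x} : K) ≤ (1 / 4 - ε) * Fintype.card α) :
    ((Fintype.card ι : K) - 1) * ε ≤ 3 / 4 := by
  refine card_sub_one_mul_le_of_half_dense (fun i ↦ {x | f x = g i x}) hagree fun i j hij ↦ ?_
  refine le_trans ?_ (hpair i j hij)
  exact_mod_cast card_le_card fun x hx ↦ by
    simp only [mem_inter, mem_filter_univ] at hx ⊢
    exact hx.1.symm.trans hx.2

end

/-- Degree-1 polynomials each agreeing with `f` on at least half the cube and pairwise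
agreeing on at most a `1/4 - 0.001` fraction number at most `4002`. -/
theorem stmt_12 (G : Type*) [AddCommGroup G] (n k : ℕ)
    (f : (Fin n → Bool) → G) (P : Fin k → G × (Fin n → G))
    (hagree : ∀ i, ((2 : ℚ) ^ n) ≤
      2 * Nat.card {x : Fin n → Bool | f x = linEval (P i) x})
    (hpair : ∀ i j, i ≠ j →
      (Nat.card {x : Fin n → Bool | linEval (P i) x = linEval (P j) x} : ℚ)
        ≤ (1 / 4 - 0.001) * 2 ^ n) :
    k ≤ 4002 := by
  classical
  rcases Nat.eq_zero_or_pos k with rfl | hk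
  · omega
  have : Nonempty (Fin k) := ⟨⟨0, hk⟩⟩
  have hcard (p : (Fin n → Bool) → Prop) [DecidablePred p] :
      Nat.card {x | p x} = (Finset.univ.filter p).card := by
    rw [Nat.card_eq_fintype_card, Fintype.card_subtype]
    rfl
  have key := card_sub_one_mul_le_of_half_agree (K := ℚ) f (fun i ↦ linEval (P i))
    (by simpa [hcard] using hagree) (by simpa [hcard] using hpair)
  rw [Fintype.card_fin] at key
  have : (k : ℚ) ≤ 751 := by linarith
  exact_mod_cast this.trans (by norm_num : (751 : ℚ) ≤ 4002)
end

section
/- Let q be a prime and let L_1(x) = 0, ..., L_m(x) = 0 be a system of affine-linear equations over ℤ_q in variables x_1,...,x_n. If the number of Boolean solutions x ∈ {0,1}^n satisfying all equations exceeds 2^{n−r}, then the dimension of the span of {L_1, ..., L_m} (as affine-linear forms over ℤ_q, i.e., vectors of n+1 coordinates including the constant term) is strictly less than r. -/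
/-!
The Boolean solutions are the 0/1 points of an affine subspace of `K^n` whose direction `U` is
cut out by the linear parts of the forms in the span `V`. If there is a solution at all, a form
in `V` with zero linear part is a constant vanishing at that solution, so `V` embeds into the
dual of `K^n` and `dim U = n - dim V`. Finally, any subspace `U` of `K^ι` has a set of at most
`dim U` coordinates on which the projection is injective (coordinates whose restrictions to `U`
form a basis of its dual), so the 0/1 points of a translate of `U` number at most `2 ^ dim U`.
-/

open Finset Module

section Coordinates

variable {ι K : Type*} [Fintype ι] [Field K]

theorem Submodule.exists_finset_card_le_finrank_of_coord_eq_zero (U : Submodule K (ι → K)) :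
    ∃ J : Finset ι, #J ≤ finrank K U ∧ ∀ u ∈ U, (∀ j ∈ J, u j = 0) → u = 0 := by
  classical
  let coord : ι → Dual K U := fun i => (LinearMap.proj i).comp U.subtype
  obtain ⟨J, -, -, hspan, hJ⟩ :=
    exists_linearIndepOn_extension (linearIndepOn_empty K coord) (Set.subset_univ _)
  refine ⟨J.toFinset, ?_, fun u hu hJu => ?_⟩
  · rw [Set.toFinset_card, ← Subspace.dual_finrank_eq]
    exact hJ.fintype_card_le_finrank
  · have hker : span K (coord '' J) ≤ LinearMap.ker (Dual.eval K U ⟨u, hu⟩) :=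
      span_le.2 <| by
        rintro _ ⟨j, hj, rfl⟩
        exact hJu j (by simpa using hj)
    funext i
    exact hker (hspan ⟨i, Set.mem_univ _, rfl⟩)

theorem Set.ncard_le_card_pow_finrank_of_sub_mem {T : Finset K} (hT : T.Nonempty)
    {P : Set (ι → K)} (hPT : ∀ p ∈ P, ∀ i, p i ∈ T) {U : Submodule K (ι → K)}
    (hPU : ∀ p ∈ P, ∀ p' ∈ P, p - p' ∈ U) :
    P.ncard ≤ #T ^ finrank K U := by
  classical
  obtain ⟨J, hJU, hJ⟩ := U.exists_finset_card_le_finrank_of_coord_eq_zero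
  let restrict : (ι → K) → (J → K) := fun p j => p j
  calc P.ncard ≤ (Fintype.piFinset fun _ : J => T : Set (J → K)).ncard := by
        refine Set.ncard_le_ncard_of_injOn restrict (fun p hp => ?_) (fun p hp p' hp' h => ?_)
          (Finset.finite_toSet _)
        · simpa [restrict] using fun j _ => hPT p hp j
        · refine sub_eq_zero.1 (hJ _ (hPU p hp p' hp') fun j hj => ?_)
          simpa [restrict, sub_eq_zero] using congrFun h ⟨j, hj⟩
    _ = #T ^ #J := by
        rw [Set.ncard_coe_finset, Fintype.card_piFinset, prod_const, card_univ, Fintype.card_coe]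
    _ ≤ #T ^ finrank K U := Nat.pow_le_pow_right hT.card_pos hJU

end Coordinates

section BooleanZeros

variable {K : Type*} [Field K] {n : ℕ}

def zeroOneVec (x : Fin n → Bool) : Fin n → K := fun j => if x j then 1 else 0

theorem zeroOneVec_injective : Function.Injective (zeroOneVec (K := K) (n := n)) := by
  intro x y h
  funext j
  have := congrFun h j
  cases hx : x j <;> cases hy : y j <;> simp_all [zeroOneVec]

variable (K n) in
def linearPart : (Fin (n + 1) → K) →ₗ[K] Dual K (Fin n → K) :=
  (dotProductBilin K K).comp (LinearMap.funLeft K K Fin.succ)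

theorem linearPart_apply (c : Fin (n + 1) → K) (y : Fin n → K) :
    linearPart K n c y = ∑ j, c j.succ * y j := rfl

def affineEval (x : Fin n → Bool) : (Fin (n + 1) → K) →ₗ[K] K :=
  LinearMap.proj 0 + (linearPart K n).flip (zeroOneVec x)

theorem affineEval_apply (x : Fin n → Bool) (c : Fin (n + 1) → K) :
    affineEval x c = c 0 + ∑ j, if x j then c j.succ else 0 := by
  simp [affineEval, linearPart_apply, zeroOneVec]

theorem eq_zero_of_linearPart_eq_zero {V : Submodule K (Fin (n + 1) → K)} {x₀ : Fin n → Bool}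
    (hx₀ : ∀ c ∈ V, affineEval x₀ c = 0) {c : Fin (n + 1) → K} (hc : c ∈ V)
    (h : linearPart K n c = 0) : c = 0 := by
  have h0 : c 0 = 0 := by simpa [affineEval, h] using hx₀ c hc
  have hsucc : ∀ j : Fin n, c j.succ = 0 := fun j => by
    simpa [linearPart_apply, Pi.single_apply] using LinearMap.congr_fun h (Pi.single j 1)
  funext i
  exact Fin.cases h0 hsucc i

theorem finrank_map_linearPart {V : Submodule K (Fin (n + 1) → K)} {x₀ : Fin n → Bool}
    (hx₀ : ∀ c ∈ V, affineEval x₀ c = 0) : finrank K (V.map (linearPart K n)) = finrank K V := by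
  have hinj : Function.Injective ((linearPart K n).domRestrict V) := by
    rw [← LinearMap.ker_eq_bot, LinearMap.ker_eq_bot']
    rintro ⟨c, hc⟩ h
    exact Subtype.ext (eq_zero_of_linearPart_eq_zero hx₀ hc h)
  rw [← LinearMap.range_domRestrict]
  exact LinearMap.finrank_range_of_inj hinj

theorem nat_card_boolean_zeros_mul_two_pow_finrank_le (V : Submodule K (Fin (n + 1) → K)) :
    Nat.card {x : Fin n → Bool | ∀ c ∈ V, affineEval x c = 0} * 2 ^ finrank K V ≤ 2 ^ n := by
  classical
  set S := {x : Fin n → Bool | ∀ c ∈ V, affineEval x c = 0}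
  rcases S.eq_empty_or_nonempty with hS | ⟨x₀, hx₀⟩
  · simp [hS]
  set U := (V.map (linearPart K n)).dualCoannihilator
  have hdiff : ∀ x ∈ S, ∀ x' ∈ S, zeroOneVec x - zeroOneVec x' ∈ U := by
    intro x hx x' hx'
    rw [Submodule.mem_dualCoannihilator]
    rintro _ ⟨c, hc, rfl⟩
    have := congrArg₂ (· - ·) (hx c hc) (hx' c hc)
    simpa [affineEval, map_sub] using this
  have hU : finrank K (V.map (linearPart K n)) + finrank K U = n := by
    rw [Subspace.finrank_add_finrank_dualCoannihilator_eq, finrank_fin_fun]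
  have hS : Nat.card S ≤ 2 ^ finrank K U :=
    calc Nat.card S = (zeroOneVec '' S : Set (Fin n → K)).ncard := by
          rw [Set.ncard_image_of_injective _ zeroOneVec_injective, Nat.card_coe_set_eq]
      _ ≤ #({0, 1} : Finset K) ^ finrank K U := by
          refine Set.ncard_le_card_pow_finrank_of_sub_mem (insert_nonempty _ _) ?_ ?_
          · rintro _ ⟨x, -, rfl⟩ j
            by_cases hj : x j <;> simp [zeroOneVec, hj]
          · rintro _ ⟨x, hx, rfl⟩ _ ⟨x', hx', rfl⟩
            exact hdiff x hx x' hx'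
      _ = 2 ^ finrank K U := by rw [card_pair zero_ne_one]
  calc Nat.card S * 2 ^ finrank K V ≤ 2 ^ finrank K U * 2 ^ finrank K V := by gcongr
    _ = 2 ^ n := by rw [← pow_add, ← finrank_map_linearPart hx₀, add_comm, hU]

end BooleanZeros

/-- If a system of affine-linear equations over `ℤ_q` (`q` prime) has more than
`2^n / 2^r` Boolean solutions, then the span of the affine-linear forms (including
constant terms) has dimension less than `r`. -/
theorem stmt_13 (q : ℕ) [Fact (Nat.Prime q)] (n m r : ℕ)
    (L : Fin m → (Fin (n + 1) → ZMod q))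
    (h : (2 : ℚ) ^ n / 2 ^ r <
      (Nat.card {x : Fin n → Bool |
        ∀ i, L i 0 + ∑ j : Fin n, (if x j then L i j.succ else 0) = 0} : ℚ)) :
    Module.finrank (ZMod q) ↥(Submodule.span (ZMod q) (Set.range L)) < r := by
  set V := Submodule.span (ZMod q) (Set.range L)
  have hsol : {x : Fin n → Bool | ∀ i, L i 0 + ∑ j : Fin n, (if x j then L i j.succ else 0) = 0}
      = {x | ∀ c ∈ V, affineEval x c = 0} := by
    ext x
    simp only [Set.mem_ofPred_eq, ← affineEval_apply, ← LinearMap.mem_ker]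
    exact (Submodule.span_le.trans Set.range_subset_iff).symm
  have hcard := nat_card_boolean_zeros_mul_two_pow_finrank_le V
  rw [← hsol] at hcard
  rw [div_lt_iff₀ (by positivity)] at h
  by_contra! hr
  have := hcard.trans' (Nat.mul_le_mul_left _ (Nat.pow_le_pow_right two_pos hr))
  exact h.not_ge (by exact_mod_cast this)
end

section
/- Let E ⊆ {0,1}^n have density δ = |E|/2^n, let ρ ∈ [−1,1], let x be uniform on {0,1}^n and let y be obtained from x by independently flipping each bit with probability (1−ρ)/2. Then Pr[x ∈ E and y ∈ E] ≤ δ^{2/(1+|ρ|)}. -/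
/-!
With `p = 1 + |ρ|`, the two-function hypercontractive inequality `𝔼[f(x) g(y)] ≤ ‖f‖_p ‖g‖_p`
for nonnegative `f, g` tensorizes over the coordinates, so it suffices to prove it on a single
bit. There, writing `a = A ± d` and `b = B ± e`, the left side is `AB + ρde`; by Cauchy–Schwarz it
is at most `√(A² + |ρ|d²) √(B² + |ρ|e²)`, and the two-point inequality
`√(A² + (p-1)d²) ≤ ‖A ± d‖_p` follows from Bernoulli's inequality and the Taylor bound
`(1+s)^p + (1-s)^p ≥ 2 + p(p-1)s²`. Taking `f = g = 𝟙_E` gives `δ^(1/p) · δ^(1/p)`.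
-/

open Real Set

lemma two_le_one_add_rpow_add_one_sub_rpow {q t : ℝ} (hq : q ≤ 0) (ht : t ∈ Ioo (-1 : ℝ) 1) :
    2 ≤ (1 + t) ^ q + (1 - t) ^ q := by
  obtain ⟨ht₁, ht₂⟩ := ht
  have hplus : 0 < 1 + t := by linarith
  have hminus : 0 < 1 - t := by linarith
  have hprod : 1 ≤ (1 + t) ^ q * (1 - t) ^ q := by
    rw [← mul_rpow hplus.le hminus.le]
    exact one_le_rpow_of_pos_of_le_one_of_nonpos (by positivity) (by nlinarith [sq_nonneg t]) hq
  nlinarith [sq_nonneg ((1 + t) ^ q - (1 - t) ^ q), rpow_pos_of_pos hplus q,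
    rpow_pos_of_pos hminus q]

lemma two_add_mul_sq_le_one_add_rpow_add_one_sub_rpow {p s : ℝ} (hp₁ : 1 ≤ p) (hp₂ : p ≤ 2)
    (hs : s ∈ Icc (-1 : ℝ) 1) :
    2 + p * (p - 1) * s ^ 2 ≤ (1 + s) ^ p + (1 - s) ^ p := by
  set φ : ℝ → ℝ := fun s ↦ (1 + s) ^ p + (1 - s) ^ p - p * (p - 1) * s ^ 2 with hφ
  have hconv : ConvexOn ℝ (Icc (-1) 1) φ := by
    refine convexOn_of_hasDerivWithinAt2_nonneg (convex_Icc _ _)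
      (f' := fun s ↦ p * (1 + s) ^ (p - 1) - p * (1 - s) ^ (p - 1) - p * (p - 1) * (2 * s))
      (f'' := fun s ↦ p * (p - 1) * ((1 + s) ^ (p - 2) + (1 - s) ^ (p - 2) - 2))
      ?_ (fun s hs ↦ ?_) (fun s hs ↦ ?_) (fun s hs ↦ ?_)
    · have : Continuous fun s : ℝ ↦ s ^ p := continuous_rpow_const (by linarith)
      fun_prop
    all_goals rw [interior_Icc] at hs; obtain ⟨hs₁, hs₂⟩ := hs
    · refine HasDerivAt.hasDerivWithinAt ?_
      have hplus := ((hasDerivAt_id' s).const_add 1).rpow_const (p := p) (Or.inl (by linarith))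
      have hminus := ((hasDerivAt_id' s).const_sub 1).rpow_const (p := p) (Or.inl (by linarith))
      refine ((hplus.add hminus).sub ((hasDerivAt_pow 2 s).const_mul (p * (p - 1)))).congr_deriv ?_
      simp only [Nat.cast_ofNat]; ring
    · refine HasDerivAt.hasDerivWithinAt ?_
      have hplus := ((hasDerivAt_id' s).const_add 1).rpow_const (p := p - 1) (Or.inl (by linarith))
      have hminus :=
        ((hasDerivAt_id' s).const_sub 1).rpow_const (p := p - 1) (Or.inl (by linarith))
      refine ((hplus.const_mul p).sub (hminus.const_mul p)).sub
        (((hasDerivAt_id' s).const_mul 2).const_mul (p * (p - 1))) |>.congr_deriv ?_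
      rw [show p - 1 - 1 = p - 2 by ring]; ring
    · have := two_le_one_add_rpow_add_one_sub_rpow (q := p - 2) (by linarith) ⟨hs₁, hs₂⟩
      have : 0 ≤ p * (p - 1) := by nlinarith
      nlinarith
  -- `φ` is convex and even, so `φ 0 ≤ (φ s + φ (-s)) / 2 = φ s`.
  have hs' : -s ∈ Icc (-1 : ℝ) 1 := ⟨by linarith [hs.2], by linarith [hs.1]⟩
  have h := hconv.2 hs hs' (by norm_num : (0 : ℝ) ≤ 1 / 2) (by norm_num : (0 : ℝ) ≤ 1 / 2)
    (by norm_num)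
  have hsymm : φ (-s) = φ s := by
    simp only [hφ, neg_sq, sub_neg_eq_add, ← sub_eq_add_neg]; ring
  rw [hsymm, show (1 / 2 : ℝ) • s + (1 / 2 : ℝ) • -s = 0 by simp] at h
  norm_num [hφ] at h
  linarith

lemma one_add_mul_sq_rpow_le {r s : ℝ} (hr₀ : 0 ≤ r) (hr₁ : r ≤ 1) (hs : s ∈ Icc (-1 : ℝ) 1) :
    (1 + r * s ^ 2) ^ ((1 + r) / 2) ≤ ((1 + s) ^ (1 + r) + (1 - s) ^ (1 + r)) / 2 :=
  calc (1 + r * s ^ 2) ^ ((1 + r) / 2) ≤ 1 + (1 + r) / 2 * (r * s ^ 2) :=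
        rpow_one_add_le_one_add_mul_self (by nlinarith [sq_nonneg s]) (by linarith)
          (by linarith : (1 + r) / 2 ≤ 1)
    _ = (2 + (1 + r) * (1 + r - 1) * s ^ 2) / 2 := by ring
    _ ≤ _ := by
        gcongr ?_ / 2
        exact two_add_mul_sq_le_one_add_rpow_add_one_sub_rpow (by linarith) (by linarith) hs

lemma sqrt_le_rpow_mean {r a b : ℝ} (hr₀ : 0 ≤ r) (hr₁ : r ≤ 1) (ha : 0 ≤ a) (hb : 0 ≤ b) :
    √(((a + b) / 2) ^ 2 + r * ((a - b) / 2) ^ 2) ≤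
      ((a ^ (1 + r) + b ^ (1 + r)) / 2) ^ (1 + r)⁻¹ := by
  rcases (add_nonneg ha hb).eq_or_lt with hab | hab
  · obtain rfl : a = 0 := by linarith
    obtain rfl : b = 0 := by linarith
    simp only [add_zero, sub_zero, zero_div, ne_eq, OfNat.ofNat_ne_zero, not_false_eq_true,
      zero_pow, mul_zero, sqrt_zero]
    positivity
  set p := 1 + r
  set A := (a + b) / 2
  set s := (a - b) / (a + b)
  have hA : 0 < A := by positivity
  have hs : s ∈ Icc (-1 : ℝ) 1 := by
    constructor
    · rw [le_div_iff₀ hab]; linarith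
    · rw [div_le_one hab]; linarith
  have hsq : A ^ 2 + r * ((a - b) / 2) ^ 2 = A ^ 2 * (1 + r * s ^ 2) := by
    simp only [A, s]; field_simp
  have hplus : 0 ≤ 1 + s := by linarith [hs.1]
  have hminus : 0 ≤ 1 - s := by linarith [hs.2]
  have hmean : (a ^ p + b ^ p) / 2 = A ^ p * (((1 + s) ^ p + (1 - s) ^ p) / 2) := by
    have ha' : a = A * (1 + s) := by simp only [A, s]; field_simp; ring
    have hb' : b = A * (1 - s) := by simp only [A, s]; field_simp; ring
    calc (a ^ p + b ^ p) / 2 = ((A * (1 + s)) ^ p + (A * (1 - s)) ^ p) / 2 := by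
          rw [← ha', ← hb']
      _ = _ := by rw [mul_rpow hA.le hplus, mul_rpow hA.le hminus]; ring
  have hp : p ≠ 0 := by positivity
  rw [hsq, hmean, sqrt_mul (sq_nonneg A), sqrt_sq hA.le,
    mul_rpow (by positivity) (by positivity), rpow_rpow_inv hA.le hp]
  gcongr
  calc √(1 + r * s ^ 2) = ((1 + r * s ^ 2) ^ (p / 2)) ^ p⁻¹ := by
        rw [sqrt_eq_rpow, ← rpow_mul (by positivity)]; congr 1; field_simp
    _ ≤ _ := rpow_le_rpow (by positivity) (one_add_mul_sq_rpow_le hr₀ hr₁ hs) (by positivity)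

lemma mul_add_mul_abs_le_sqrt_mul_sqrt {r A B d e : ℝ} (hr : 0 ≤ r) :
    A * B + r * (|d| * |e|) ≤ √(A ^ 2 + r * d ^ 2) * √(B ^ 2 + r * e ^ 2) := by
  rw [← sqrt_mul (by positivity)]
  apply le_sqrt_of_sq_le
  rw [← sq_abs d, ← sq_abs e]
  nlinarith [mul_nonneg hr (sq_nonneg (A * |e| - B * |d|))]

lemma two_point_hypercontractivity {ρ a₀ a₁ b₀ b₁ : ℝ} (hρ : ρ ∈ Icc (-1 : ℝ) 1) (ha₀ : 0 ≤ a₀)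
    (ha₁ : 0 ≤ a₁) (hb₀ : 0 ≤ b₀) (hb₁ : 0 ≤ b₁) :
    ((1 + ρ) / 2 * (a₀ * b₀ + a₁ * b₁) + (1 - ρ) / 2 * (a₀ * b₁ + a₁ * b₀)) / 2 ≤
      ((a₀ ^ (1 + |ρ|) + a₁ ^ (1 + |ρ|)) / 2) ^ (1 + |ρ|)⁻¹ *
        ((b₀ ^ (1 + |ρ|) + b₁ ^ (1 + |ρ|)) / 2) ^ (1 + |ρ|)⁻¹ := by
  have hr₁ : |ρ| ≤ 1 := abs_le.2 hρ
  set d := (a₀ - a₁) / 2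
  set e := (b₀ - b₁) / 2
  have hρde : ρ * (d * e) ≤ |ρ| * (|d| * |e|) := by
    rw [← abs_mul, ← abs_mul]; exact le_abs_self _
  calc _ = (a₀ + a₁) / 2 * ((b₀ + b₁) / 2) + ρ * (d * e) := by ring
    _ ≤ (a₀ + a₁) / 2 * ((b₀ + b₁) / 2) + |ρ| * (|d| * |e|) := by gcongr
    _ ≤ √(((a₀ + a₁) / 2) ^ 2 + |ρ| * d ^ 2) * √(((b₀ + b₁) / 2) ^ 2 + |ρ| * e ^ 2) :=
        mul_add_mul_abs_le_sqrt_mul_sqrt (abs_nonneg ρ)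
    _ ≤ _ := by
        gcongr
        · exact sqrt_le_rpow_mean (abs_nonneg ρ) hr₁ ha₀ ha₁
        · exact sqrt_le_rpow_mean (abs_nonneg ρ) hr₁ hb₀ hb₁

noncomputable section

def bitNoise (ρ : ℝ) (b b' : Bool) : ℝ := if b = b' then (1 + ρ) / 2 else (1 - ρ) / 2

lemma bitNoise_nonneg {ρ : ℝ} (hρ : ρ ∈ Icc (-1 : ℝ) 1) (b b' : Bool) : 0 ≤ bitNoise ρ b b' := by
  unfold bitNoise; split_ifs <;> linarith [hρ.1, hρ.2]

section Cube

variable {n : ℕ}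

/-- `𝔼[f x * g y]` for `x` uniform on the cube and `y` its `ρ`-correlated copy. -/
def noiseForm (ρ : ℝ) (f g : (Fin n → Bool) → ℝ) : ℝ :=
  (∑ x, ∑ y, (∏ i, bitNoise ρ (x i) (y i)) * (f x * g y)) / 2 ^ n

def cubeNorm (p : ℝ) (f : (Fin n → Bool) → ℝ) : ℝ := ((∑ x, f x ^ p) / 2 ^ n) ^ p⁻¹

lemma cubeNorm_nonneg (p : ℝ) {f : (Fin n → Bool) → ℝ} (hf : ∀ x, 0 ≤ f x) :
    0 ≤ cubeNorm p f :=
  rpow_nonneg (div_nonneg (Finset.sum_nonneg fun _ _ ↦ rpow_nonneg (hf _) _) (by positivity)) _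

lemma sum_fin_succ_pi {α M : Type*} [Fintype α] [AddCommMonoid M] (F : (Fin (n + 1) → α) → M) :
    ∑ x, F x = ∑ a, ∑ z : Fin n → α, F (Fin.cons a z) := by
  rw [← (Fin.consEquiv fun _ ↦ α).sum_comp, Fintype.sum_prod_type]
  rfl

lemma noiseForm_succ (ρ : ℝ) (f g : (Fin (n + 1) → Bool) → ℝ) :
    noiseForm ρ f g = (∑ b, ∑ b', bitNoise ρ b b' *
      noiseForm ρ (fun z ↦ f (Fin.cons b z)) (fun z ↦ g (Fin.cons b' z))) / 2 := by
  simp only [noiseForm, sum_fin_succ_pi, Fin.prod_univ_succ, Fin.cons_zero, Fin.cons_succ,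
    Finset.mul_sum, Finset.sum_div, pow_succ]
  refine Finset.sum_congr rfl fun b _ ↦ ?_
  rw [Finset.sum_comm]
  refine Finset.sum_congr rfl fun b' _ ↦ Finset.sum_congr rfl fun z _ ↦
    Finset.sum_congr rfl fun z' _ ↦ ?_
  ring

lemma cubeNorm_succ {p : ℝ} (hp : p ≠ 0) {f : (Fin (n + 1) → Bool) → ℝ} (hf : ∀ x, 0 ≤ f x) :
    cubeNorm p f = ((cubeNorm p (fun z ↦ f (Fin.cons true z)) ^ p +
      cubeNorm p (fun z ↦ f (Fin.cons false z)) ^ p) / 2) ^ p⁻¹ := by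
  have hmean (b : Bool) : 0 ≤ (∑ z : Fin n → Bool, f (Fin.cons b z) ^ p) / 2 ^ n :=
    div_nonneg (Finset.sum_nonneg fun _ _ ↦ rpow_nonneg (hf _) _) (by positivity)
  simp only [cubeNorm]
  rw [rpow_inv_rpow (hmean true) hp, rpow_inv_rpow (hmean false) hp, sum_fin_succ_pi,
    Fintype.sum_bool, pow_succ]
  congr 1
  field_simp

theorem noiseForm_le_cubeNorm_mul_cubeNorm {ρ : ℝ} (hρ : ρ ∈ Icc (-1 : ℝ) 1)
    {f g : (Fin n → Bool) → ℝ} (hf : ∀ x, 0 ≤ f x) (hg : ∀ x, 0 ≤ g x) :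
    noiseForm ρ f g ≤ cubeNorm (1 + |ρ|) f * cubeNorm (1 + |ρ|) g := by
  have hp : 1 + |ρ| ≠ 0 := by positivity
  induction n with
  | zero => simp [noiseForm, cubeNorm, rpow_rpow_inv (hf _) hp, rpow_rpow_inv (hg _) hp]
  | succ n ih =>
    set F := fun b z ↦ f (Fin.cons b z)
    set G := fun b z ↦ g (Fin.cons b z)
    have hF b : ∀ z, 0 ≤ F b z := fun _ ↦ hf _
    have hG b : ∀ z, 0 ≤ G b z := fun _ ↦ hg _
    rw [noiseForm_succ, cubeNorm_succ hp hf, cubeNorm_succ hp hg]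
    calc _ ≤ (∑ b, ∑ b', bitNoise ρ b b' *
              (cubeNorm (1 + |ρ|) (F b) * cubeNorm (1 + |ρ|) (G b'))) / 2 := by
          gcongr with b _ b' _
          · exact bitNoise_nonneg hρ b b'
          · exact ih (hF b) (hG b')
      _ ≤ _ := by
          convert two_point_hypercontractivity hρ (cubeNorm_nonneg _ (hF true))
            (cubeNorm_nonneg _ (hF false)) (cubeNorm_nonneg _ (hG true))
            (cubeNorm_nonneg _ (hG false)) using 2
          simp only [Fintype.sum_bool, bitNoise, Bool.true_eq_false, Bool.false_eq_true, ↓reduceIte]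
          ring

lemma noiseForm_indicator (ρ : ℝ) (E : Finset (Fin n → Bool)) :
    noiseForm ρ (fun x ↦ if x ∈ E then 1 else 0) (fun x ↦ if x ∈ E then 1 else 0) =
      (∑ x ∈ E, ∑ y ∈ E, ∏ i, bitNoise ρ (x i) (y i)) / 2 ^ n := by
  simp [noiseForm, Finset.sum_ite_mem]

lemma cubeNorm_indicator {p : ℝ} (hp : p ≠ 0) (E : Finset (Fin n → Bool)) :
    cubeNorm p (fun x ↦ if x ∈ E then 1 else 0) = ((E.card : ℝ) / 2 ^ n) ^ p⁻¹ := by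
  simp [cubeNorm, apply_ite (· ^ p), zero_rpow hp]

end Cube

end

/-- Small-set expansion consequence of hypercontractivity: for a set `E` of density
`δ` in `{0,1}^n` and `ρ`-correlated pair `(x, y)`,
`Pr[x ∈ E ∧ y ∈ E] ≤ δ^(2/(1+|ρ|))`. -/
theorem stmt_16 (n : ℕ) (E : Finset (Fin n → Bool)) (ρ : ℝ)
    (hρ : ρ ∈ Set.Icc (-1 : ℝ) 1) :
    (∑ x ∈ E, ∑ y ∈ E, ∏ i, (if x i = y i then (1 + ρ) / 2 else (1 - ρ) / 2)) / 2 ^ n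
      ≤ ((E.card : ℝ) / 2 ^ n) ^ ((2 : ℝ) / (1 + |ρ|)) := by
  have hp : 1 + |ρ| ≠ 0 := by positivity
  have hE (x : Fin n → Bool) : 0 ≤ if x ∈ E then (1 : ℝ) else 0 := by split_ifs <;> norm_num
  calc _ = noiseForm ρ (fun x ↦ if x ∈ E then 1 else 0) (fun x ↦ if x ∈ E then 1 else 0) :=
        (noiseForm_indicator ρ E).symm
    _ ≤ _ := noiseForm_le_cubeNorm_mul_cubeNorm hρ hE hE
    _ = _ := by
        rw [cubeNorm_indicator hp, ← rpow_add' (by positivity) (by positivity)]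
        ring_nf
end

section
/- Let X be a finite universe and S₁,...,S_t ⊆ X with densities μ(S_i) = |S_i|/|X| = 1/2 + α_i, α_i ≥ 0, such that pairwise intersections satisfy μ(S_i ∩ S_j) ≤ 1/4 − 0.001 for all i ≠ j. Let μ(S₁ ∪ ... ∪ S_t) = 1/2 + α with α ≤ 1/2. Then there do not exist more than 4002 indices i; i.e., t ≤ 4002. -/
/-!
Let `c x` count the sets `S i` containing `x`. Double counting gives `∑ c = ∑ |S i| ≥ t N / 2`
and `∑ c² = ∑_{i,j} |S i ∩ S j| ≤ t N + t (t - 1) (1/4 - 0.001) N`, so Cauchy–Schwarz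
`(∑ c)² ≤ N ∑ c²` yields `t / 4 ≤ 1 + (t - 1) (1/4 - 0.001)`, that is `t ≤ 751`.
-/

namespace Finset

section CoverCount
variable {X ι : Type*} [DecidableEq X] [Fintype ι] (S : ι → Finset X)

def coverCount (x : X) : ℕ := #{i | x ∈ S i}

theorem coverCount_sq (x : X) :
    coverCount S x ^ 2 = ∑ i, ∑ j, if x ∈ S i ∩ S j then 1 else 0 := by
  simp only [coverCount, card_filter, sq, sum_mul_sum, mem_inter, ite_zero_mul_ite_zero, mul_one]

variable [Fintype X]

theorem sum_coverCount : ∑ x, coverCount S x = ∑ i, #(S i) := by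
  simp only [coverCount, card_filter]
  rw [sum_comm]
  simp

theorem sum_coverCount_sq :
    ∑ x, coverCount S x ^ 2 = ∑ i, ∑ j, #(S i ∩ S j) := by
  simp only [coverCount_sq]
  rw [sum_comm]
  simp_rw [sum_comm (s := univ (α := X))]
  simp [-mem_inter]

theorem sq_sum_card_le_card_mul_sum_card_inter_s19 :
    (∑ i, #(S i)) ^ 2 ≤ Fintype.card X * ∑ i, ∑ j, #(S i ∩ S j) := by
  rw [← sum_coverCount, ← sum_coverCount_sq]
  exact sq_sum_le_card_mul_sum_sq

end CoverCount

section Density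
variable {X ι : Type*} [Fintype X] [DecidableEq X] [Fintype ι] {S : ι → Finset X} {a b : ℝ}

theorem sum_card_inter_le_of_pairwise_inter_le
    (hpair : ∀ i j, i ≠ j → (#(S i ∩ S j) : ℝ) ≤ b * Fintype.card X) (i : ι) :
    ∑ j, (#(S i ∩ S j) : ℝ) ≤ (1 + (Fintype.card ι - 1) * b) * Fintype.card X := by
  classical
  rw [← add_sum_erase _ _ (mem_univ i), inter_self]
  have hdiag : (#(S i) : ℝ) ≤ Fintype.card X := by exact_mod_cast card_le_univ (S i)
  have hoff :
      ∑ j ∈ univ.erase i, (#(S i ∩ S j) : ℝ) ≤ (Fintype.card ι - 1) * (b * Fintype.card X) :=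
    calc ∑ j ∈ univ.erase i, (#(S i ∩ S j) : ℝ)
        ≤ ∑ _j ∈ univ.erase i, b * Fintype.card X :=
          sum_le_sum fun j hj => hpair i j (ne_of_mem_erase hj).symm
      _ = (Fintype.card ι - 1) * (b * Fintype.card X) := by
          rw [sum_const, card_erase_of_mem (mem_univ i), card_univ, nsmul_eq_mul,
            Nat.cast_pred (Fintype.card_pos_iff.2 ⟨i⟩)]
  linarith

theorem sq_card_mul_le_of_pairwise_inter_le [Nonempty X]
    (hdense : ∀ i, a * Fintype.card X ≤ #(S i)) (ha : 0 ≤ a)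
    (hpair : ∀ i j, i ≠ j → (#(S i ∩ S j) : ℝ) ≤ b * Fintype.card X) :
    (Fintype.card ι * a) ^ 2 ≤ Fintype.card ι * (1 + (Fintype.card ι - 1) * b) := by
  have hCS : (∑ i, (#(S i) : ℝ)) ^ 2 ≤ Fintype.card X * ∑ i, ∑ j, (#(S i ∩ S j) : ℝ) := by
    exact_mod_cast sq_sum_card_le_card_mul_sum_card_inter_s19 S
  have hN : (0 : ℝ) < Fintype.card X := Nat.cast_pos.2 Fintype.card_pos
  set N : ℝ := (Fintype.card X : ℝ)
  set t : ℝ := (Fintype.card ι : ℝ)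
  have hsum : t * a * N ≤ ∑ i, (#(S i) : ℝ) := by
    calc t * a * N = ∑ _i : ι, a * N := by simp [t, mul_assoc]
      _ ≤ _ := sum_le_sum fun i _ => hdense i
  have hinter : ∑ i, ∑ j, (#(S i ∩ S j) : ℝ) ≤ t * (1 + (t - 1) * b) * N := by
    calc _ ≤ ∑ _i : ι, (1 + (t - 1) * b) * N :=
          sum_le_sum fun i _ => sum_card_inter_le_of_pairwise_inter_le hpair i
      _ = t * (1 + (t - 1) * b) * N := by simp [t, mul_assoc]
  have hscaled : (t * a) ^ 2 * N ^ 2 ≤ t * (1 + (t - 1) * b) * N ^ 2 := by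
    calc (t * a) ^ 2 * N ^ 2 = (t * a * N) ^ 2 := by ring
      _ ≤ (∑ i, (#(S i) : ℝ)) ^ 2 := pow_le_pow_left₀ (by positivity) hsum 2
      _ ≤ N * (t * (1 + (t - 1) * b) * N) := hCS.trans (mul_le_mul_of_nonneg_left hinter hN.le)
      _ = t * (1 + (t - 1) * b) * N ^ 2 := by ring
  exact le_of_mul_le_mul_right hscaled (by positivity)

end Density

end Finset

theorem stmt_19_general (X : Type*) [Fintype X] [Nonempty X] [DecidableEq X]
    (t : ℕ) (S : Fin t → Finset X) (α : Fin t → ℝ) (hα : ∀ i, 0 ≤ α i)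
    (hdens : ∀ i, ((S i).card : ℝ) = (1 / 2 + α i) * Fintype.card X)
    (hpair : ∀ i j, i ≠ j →
      (((S i) ∩ (S j)).card : ℝ) ≤ ((1 : ℝ) / 4 - 0.001) * Fintype.card X) :
    t ≤ 4002 := by
  have hdense : ∀ i, (1 / 2 : ℝ) * Fintype.card X ≤ (S i).card := fun i => by
    rw [hdens i]
    gcongr
    linarith [hα i]
  have key := Finset.sq_card_mul_le_of_pairwise_inter_le hdense (by norm_num) hpair
  rw [Fintype.card_fin] at key
  by_contra! ht
  have ht' : (4003 : ℝ) ≤ t := by exact_mod_cast ht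
  nlinarith

/-- Abstract set-system form of the clique bound: subsets of a finite universe of
densities `1/2 + αᵢ` (`αᵢ ≥ 0`) with pairwise intersections of density at most
`1/4 - 0.001`, whose union has density `1/2 + β` with `β ≤ 1/2`, number at most
`4002`. -/
theorem stmt_19 (X : Type*) [Fintype X] [Nonempty X] [DecidableEq X]
    (t : ℕ) (S : Fin t → Finset X) (α : Fin t → ℝ) (hα : ∀ i, 0 ≤ α i)
    (hdens : ∀ i, ((S i).card : ℝ) = (1 / 2 + α i) * Fintype.card X)
    (hpair : ∀ i j, i ≠ j →
      (((S i) ∩ (S j)).card : ℝ) ≤ ((1 : ℝ) / 4 - 0.001) * Fintype.card X)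
    (β : ℝ) (hβ : β ≤ 1 / 2)
    (hunion : ((Finset.univ.biUnion S).card : ℝ) = (1 / 2 + β) * Fintype.card X) :
    t ≤ 4002 :=
  stmt_19_general X t S α hα hdens hpair
end
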